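/- arXiv:math/0410619 — 9 statements merged into one kernel-verified Lean document; each statement's English description precedes it below -/
import Mathlib

section
/- For all real numbers a, b and every integer k ≥ 2, (a-b)^{2k} ≥ a^{2k} + b^{2k} - 2k(a^{2k-1} b + a b^{2k-1}). -/
/-!
With `x = a`, `y = -b` and `n = 2k`, the claim says that the middle terms of the binomial expansion
of `(x + y) ^ n`, those other than `x ^ n`, `n x ^ (n - 1) y`, `n x y ^ (n - 1)`, `y ^ n`, have a
nonnegative sum. This sum is invariant under swapping `x, y` and under `(x, y) ↦ (-x, -y)`, so we may
assume `x ≥ |y|`. If `y ≥ 0` every middle term is nonnegative. If `y ≤ 0`, Bernoulli's inequality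
gives `(x + y) ^ n ≥ x ^ n + n x ^ (n - 1) y`, while `n x y ^ (n - 1) + y ^ n = y ^ (n - 1) (n x + y)`
is nonpositive because `n - 1` is odd.
-/

open Finset

lemma add_pow_extreme_terms_le_of_nonneg {n : ℕ} (hn : 3 ≤ n) {x y : ℝ} (hx : 0 ≤ x)
    (hy : 0 ≤ y) : x ^ n + n * x ^ (n - 1) * y + n * x * y ^ (n - 1) + y ^ n ≤ (x + y) ^ n := by
  obtain ⟨m, rfl⟩ : ∃ m, n = m + 3 := ⟨n - 3, by omega⟩
  rw [add_pow]
  calc _ = ∑ i ∈ {0, 1, m + 2, m + 3}, x ^ i * y ^ (m + 3 - i) * (m + 3).choose i := by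
        rw [sum_insert (by simp), sum_insert (by simp), sum_pair (by omega)]
        simp only [Nat.cast_add, Nat.cast_ofNat, Nat.cast_one, Nat.add_one_sub_one, tsub_zero,
          tsub_self, Nat.reduceSubDiff, add_tsub_cancel_left, pow_zero, pow_one, one_mul, mul_one,
          Nat.choose_zero_right, Nat.choose_one_right, Nat.choose_succ_self_right, Nat.choose_self]
        ring
    _ ≤ _ := sum_le_sum_of_subset_of_nonneg
        (by intro i; simp only [mem_insert, mem_singleton, mem_range]; omega)
        fun _ _ _ => by positivity

lemma add_pow_extreme_terms_le_of_nonpos {n : ℕ} (hn : Odd (n - 1)) {x y : ℝ}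
    (hyx : -x ≤ y) (hy : y ≤ 0) :
    x ^ n + n * x ^ (n - 1) * y + n * x * y ^ (n - 1) + y ^ n ≤ (x + y) ^ n := by
  have hn1 : n = n - 1 + 1 := by have := hn.pos; omega
  have tail : n * x * y ^ (n - 1) + y ^ n ≤ 0 := by
    have : 1 ≤ (n : ℝ) := by exact_mod_cast hn.pos.trans_le (Nat.sub_le n 1)
    calc _ = y ^ (n - 1) * (n * x + y) := by nth_rw 3 [hn1]; ring
      _ ≤ 0 := mul_nonpos_of_nonpos_of_nonneg (hn.pow_nonpos hy) (by nlinarith)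
  linarith [pow_add_mul_le_add_pow (by linarith : 0 ≤ x) (by linarith : 0 ≤ 2 * x + y) n]

theorem add_pow_extreme_terms_le {n : ℕ} (hn : Even n) (h3 : 3 ≤ n) (x y : ℝ) :
    x ^ n + n * x ^ (n - 1) * y + n * x * y ^ (n - 1) + y ^ n ≤ (x + y) ^ n := by
  have hodd : Odd (n - 1) := Nat.Even.sub_odd (by omega) hn odd_one
  wlog hyx : |y| ≤ |x| generalizing x y
  · have := this y x (le_of_not_ge hyx)
    rw [add_comm y x] at this
    linarith
  wlog hx : 0 ≤ x generalizing x y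
  · have := this (-x) (-y) (by simpa) (by linarith)
    rw [hn.neg_pow, hn.neg_pow, hodd.neg_pow, hodd.neg_pow, ← neg_add, hn.neg_pow] at this
    linarith
  rcases le_total 0 y with hy | hy
  · exact add_pow_extreme_terms_le_of_nonneg h3 hx hy
  · exact add_pow_extreme_terms_le_of_nonpos hodd
      (by linarith [neg_abs_le y, abs_of_nonneg hx]) hy

theorem stmt_1 (a b : ℝ) (k : ℕ) (hk : 2 ≤ k) :
    (a - b) ^ (2 * k) ≥
      a ^ (2 * k) + b ^ (2 * k)
        - 2 * (k : ℝ) * (a ^ (2 * k - 1) * b + a * b ^ (2 * k - 1)) := by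
  have hodd : Odd (2 * k - 1) := Nat.Even.sub_odd (by omega) (even_two_mul k) odd_one
  have key := add_pow_extreme_terms_le (even_two_mul k) (by omega) a (-b)
  rw [(even_two_mul k).neg_pow, hodd.neg_pow, ← sub_eq_add_neg] at key
  push_cast at key
  linarith
end

section
/- For every real number a, every real number b > 0, and every positive integer k, (a+b)^{2k-1} - a^{2k-1} ≥ 4^{1-k} b^{2k-1}. -/
/-!
With `c = b / 2` and `x = a + b / 2` we have `a + b = c + x`, and since `2k - 1` is odd,
`-a ^ (2k - 1) = (c - x) ^ (2k - 1)`. So the claim is `(c + x) ^ n + (c - x) ^ n ≥ 2 c ^ n`,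
which holds for every `n` and `c ≥ 0`: in the binomial expansion the odd powers of `x` cancel
and the `x ^ 0` terms alone give `2 c ^ n`.
-/

open Finset

section

variable {R : Type*} [CommRing R] [LinearOrder R] [IsStrictOrderedRing R]

lemma pow_add_neg_pow_nonneg (x : R) (i : ℕ) : 0 ≤ x ^ i + (-x) ^ i := by
  rcases Nat.even_or_odd i with hi | hi
  · rw [hi.neg_pow, ← two_mul]
    exact mul_nonneg zero_le_two (hi.pow_nonneg x)
  · rw [hi.neg_pow, add_neg_cancel]

lemma two_mul_pow_le_add_pow_add_sub_pow {c : R} (hc : 0 ≤ c) (x : R) (n : ℕ) :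
    2 * c ^ n ≤ (c + x) ^ n + (c - x) ^ n := by
  have hexpand : (c + x) ^ n + (c - x) ^ n
      = ∑ i ∈ range (n + 1), (x ^ i + (-x) ^ i) * c ^ (n - i) * n.choose i := by
    rw [add_comm c, sub_eq_neg_add, add_pow, add_pow, ← sum_add_distrib]
    exact sum_congr rfl fun i _ => by ring
  have hterm_nonneg : ∀ i ∈ range (n + 1), 0 ≤ (x ^ i + (-x) ^ i) * c ^ (n - i) * n.choose i :=
    fun i _ => by have := pow_add_neg_pow_nonneg x i; positivity
  calc 2 * c ^ n
    _ = (x ^ 0 + (-x) ^ 0) * c ^ (n - 0) * n.choose 0 := by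
      rw [pow_zero, pow_zero, Nat.sub_zero, Nat.choose_zero_right, Nat.cast_one, mul_one]
      ring
    _ ≤ (c + x) ^ n + (c - x) ^ n :=
      hexpand ▸ single_le_sum hterm_nonneg (mem_range.mpr n.succ_pos)

end

theorem stmt_2 (a b : ℝ) (hb : 0 < b) (k : ℕ) (hk : 1 ≤ k) :
    (a + b) ^ (2 * k - 1) - a ^ (2 * k - 1) ≥
      (4 : ℝ) ^ ((1 : ℤ) - (k : ℤ)) * b ^ (2 * k - 1) := by
  obtain ⟨m, rfl⟩ := Nat.exists_eq_add_of_le' hk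
  have hn : 2 * (m + 1) - 1 = 2 * m + 1 := by omega
  have hkey := two_mul_pow_le_add_pow_add_sub_pow (c := b / 2) (by positivity) (a + b / 2)
    (2 * m + 1)
  have hlhs : (b / 2 + (a + b / 2)) ^ (2 * m + 1) + (b / 2 - (a + b / 2)) ^ (2 * m + 1)
      = (a + b) ^ (2 * m + 1) - a ^ (2 * m + 1) := by
    rw [show b / 2 - (a + b / 2) = -a by ring, (odd_two_mul_add_one m).neg_pow]
    ring
  have hrhs : 2 * (b / 2) ^ (2 * m + 1)
      = (4 : ℝ) ^ ((1 : ℤ) - ((m + 1 : ℕ) : ℤ)) * b ^ (2 * m + 1) := by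
    rw [show (1 : ℤ) - ((m + 1 : ℕ) : ℤ) = -(m : ℤ) by push_cast; ring, zpow_neg, zpow_natCast,
      show (4 : ℝ) = 2 ^ 2 by norm_num, ← pow_mul, div_pow, pow_succ 2 (2 * m)]
    field_simp
  rw [hn, ge_iff_le, ← hlhs, ← hrhs]
  exact hkey
end

section
/- Let p, q ∈ L¹(𝕋) where 𝕋 = ℝ/2πℤ, and let 0 ≤ α < 1/2. Then ∫_{Ω_α} p(t+x) q(t-x) dt dx = (1/2)(∫₀^{2π} p)(∫₀^{2π} q) - (1/2)∫_{-2απ}^{2απ} ∫₀^{2π} p(y) q(z+y) dy dz, where Ω_α := 𝕋 × (απ, π - απ). -/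
/-! Substituting `y = t + x` turns the inner integral over `𝕋` into `c (-2x)`, where
`c z = ∫_𝕋 p(y) q(z + y) dy` is the correlation of `p` and `q`; hence the integral over `Ω_α`
is `½ ∫_{2απ - 2π}^{-2απ} c`. As `c` is `2π`-periodic, this interval is a period minus
`[-2απ, 2απ]`, and `∫_𝕋 c = (∫ p)(∫ q)` by Fubini. The integrands on `ℝ²` are integrable
because an invertible linear map only rescales Lebesgue measure. -/

open MeasureTheory Real Set

theorem MeasureTheory.Integrable.comp_linearMap {E F : Type*} [NormedAddCommGroup E]
    [NormedSpace ℝ E] [MeasurableSpace E] [BorelSpace E] [FiniteDimensional ℝ E]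
    [NormedAddCommGroup F] {μ : Measure E} [μ.IsAddHaarMeasure] {f : E → F}
    (hf : Integrable f μ) {L : E →ₗ[ℝ] E} (hL : LinearMap.det L ≠ 0) :
    Integrable (f ∘ L) μ := by
  have hmap := Measure.map_linearMap_addHaar_eq_smul_addHaar μ hL
  refine (integrable_map_measure ?_ L.continuous_of_finiteDimensional.aemeasurable).mp ?_
  · rw [hmap]
    exact hf.aestronglyMeasurable.smul_measure _
  · rw [hmap]
    exact hf.smul_measure ENNReal.ofReal_ne_top

theorem Function.Periodic.intervalIntegral_eq_sub_intervalIntegral_symm {E : Type*}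
    [NormedAddCommGroup E] [NormedSpace ℝ E] {f : ℝ → E} {T : ℝ} (hf : Function.Periodic f T)
    (hfi : ∀ a b, IntervalIntegrable f volume a b) (s : ℝ) :
    ∫ x in s - T..-s, f x = (∫ x in 0..T, f x) - ∫ x in -s..s, f x := by
  have hperiod := hf.intervalIntegral_add_eq (s - T) 0
  rw [sub_add_cancel, zero_add] at hperiod
  rw [← hperiod, ← intervalIntegral.integral_add_adjacent_intervals (hfi _ (-s)) (hfi (-s) s),
    add_sub_cancel_right]

theorem MeasureTheory.IntegrableOn.mul_comp_linear {R : Type*} [NormedRing R] {f g : ℝ → R}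
    {A B : Set ℝ} {S : Set (ℝ × ℝ)} (hf : IntegrableOn f A) (hg : IntegrableOn g B)
    (hA : MeasurableSet A) (hB : MeasurableSet B) (hS : MeasurableSet S) {a b c d : ℝ}
    (hdet : a * d - b * c ≠ 0)
    (hmaps : ∀ w ∈ S, a * w.1 + b * w.2 ∈ A ∧ c * w.1 + d * w.2 ∈ B) :
    IntegrableOn (fun w => f (a * w.1 + b * w.2) * g (c * w.1 + d * w.2)) S := by
  have hprod : Integrable (fun w : ℝ × ℝ => A.indicator f w.1 * B.indicator g w.2) := by
    rw [Measure.volume_eq_prod]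
    exact ((integrable_indicator_iff hA).2 hf).mul_prod ((integrable_indicator_iff hB).2 hg)
  have hcomp := hprod.comp_linearMap (L := Matrix.toLin (Module.Basis.finTwoProd ℝ)
    (Module.Basis.finTwoProd ℝ) !![a, b; c, d]) (by simpa [Matrix.det_fin_two] using hdet)
  refine hcomp.integrableOn.congr_fun (fun w hw => ?_) hS
  simp [indicator_of_mem (hmaps w hw).1, indicator_of_mem (hmaps w hw).2]

section

variable {𝕜 : Type*} [RCLike 𝕜]

noncomputable def correlation (p q : ℝ → 𝕜) (T z : ℝ) : 𝕜 := ∫ y in 0..T, p y * q (z + y)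

variable {p q : ℝ → 𝕜} {T : ℝ}

theorem Function.Periodic.correlation (hq : Function.Periodic q T) :
    Function.Periodic (correlation p q T) T := fun z => by
  simp only [_root_.correlation, add_right_comm z T, hq _]

theorem integrableOn_correlation_integrand (hT : T ≠ 0) (hq : Function.Periodic q T)
    (hpi : IntervalIntegrable p volume 0 T) (hqi : IntervalIntegrable q volume 0 T) :
    IntegrableOn (fun w : ℝ × ℝ => p w.2 * q (w.1 + w.2)) (Ioc 0 T ×ˢ Ioc 0 T) := by
  have h := hpi.1.mul_comp_linear (hq.intervalIntegrable₀ hT hqi 0 (2 * T)).1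
    measurableSet_Ioc measurableSet_Ioc (measurableSet_Ioc.prod measurableSet_Ioc)
    (S := Ioc 0 T ×ˢ Ioc 0 T) (a := 0) (b := 1) (c := 1) (d := 1) (by norm_num)
    fun w ⟨hz, hy⟩ => by
      simp only [mem_Ioc] at hz hy ⊢; constructor <;> constructor <;> linarith
  simpa only [zero_mul, one_mul, zero_add] using h

theorem intervalIntegrable_correlation (hT : 0 < T) (hq : Function.Periodic q T)
    (hpi : IntervalIntegrable p volume 0 T) (hqi : IntervalIntegrable q volume 0 T) (a b : ℝ) :
    IntervalIntegrable (correlation p q T) volume a b := by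
  refine hq.correlation.intervalIntegrable₀ hT.ne' ?_ a b
  have h := integrableOn_correlation_integrand hT.ne' hq hpi hqi
  rw [IntegrableOn, Measure.volume_eq_prod, ← Measure.prod_restrict] at h
  refine (intervalIntegrable_iff_integrableOn_Ioc_of_le hT.le).2 (h.integral_prod_left.congr ?_)
  exact Filter.Eventually.of_forall fun z => (intervalIntegral.integral_of_le hT.le).symm

theorem integral_correlation (hT : 0 < T) (hq : Function.Periodic q T)
    (hpi : IntervalIntegrable p volume 0 T) (hqi : IntervalIntegrable q volume 0 T) :
    ∫ z in 0..T, correlation p q T z = (∫ y in 0..T, p y) * ∫ y in 0..T, q y := by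
  have h := integrableOn_correlation_integrand hT.ne' hq hpi hqi
  rw [IntegrableOn, Measure.volume_eq_prod, ← Measure.prod_restrict] at h
  have hshift (y : ℝ) : ∫ z in 0..T, q (z + y) = ∫ z in 0..T, q z := by
    rw [intervalIntegral.integral_comp_add_right, zero_add, add_comm,
      hq.intervalIntegral_add_eq y 0, zero_add]
  simp only [correlation, intervalIntegral.integral_of_le hT.le] at hshift ⊢
  rw [integral_integral_swap h]
  simp only [integral_const_mul, hshift, integral_mul_const]

theorem integral_mul_comp_add_sub_eq_correlation (hp : Function.Periodic p T)
    (hq : Function.Periodic q T) (x : ℝ) :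
    ∫ t in 0..T, p (t + x) * q (t - x) = correlation p q T (-2 * x) := by
  have hper : Function.Periodic (fun y => p y * q (-2 * x + y)) T := hp.mul (hq.const_add _)
  have h := intervalIntegral.integral_comp_add_right (a := 0) (b := T)
    (fun y => p y * q (-2 * x + y)) x
  rw [zero_add, add_comm T, hper.intervalIntegral_add_eq x 0, zero_add] at h
  rw [correlation, ← h]
  congr 1 with t
  ring_nf

theorem setIntegral_prod_Ioo_eq_correlation (hT : 0 < T) (hp : Function.Periodic p T)
    (hq : Function.Periodic q T) (hpi : IntervalIntegrable p volume 0 T)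
    (hqi : IntervalIntegrable q volume 0 T) {a b : ℝ} (hab : a ≤ b) :
    ∫ w in Ioc 0 T ×ˢ Ioo a b, p (w.1 + w.2) * q (w.1 - w.2)
      = (2 : ℝ)⁻¹ • ∫ z in -(2 * b)..-(2 * a), correlation p q T z := by
  have hint : IntegrableOn (fun w : ℝ × ℝ => p (w.1 + w.2) * q (w.1 - w.2))
      (Ioc 0 T ×ˢ Ioo a b) := by
    have h := (hp.intervalIntegrable₀ hT.ne' hpi a (T + b)).1.mul_comp_linear
      (hq.intervalIntegrable₀ hT.ne' hqi (-b) (T - a)).1 measurableSet_Ioc measurableSet_Ioc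
      (measurableSet_Ioc.prod measurableSet_Ioo) (S := Ioc 0 T ×ˢ Ioo a b)
      (a := 1) (b := 1) (c := 1) (d := -1) (by norm_num) fun w ⟨ht, hx⟩ => by
        simp only [mem_Ioc, mem_Ioo] at ht hx ⊢; constructor <;> constructor <;> linarith
    simpa only [one_mul, neg_one_mul, ← sub_eq_add_neg] using h
  rw [IntegrableOn, Measure.volume_eq_prod, ← Measure.prod_restrict] at hint
  rw [Measure.volume_eq_prod, ← Measure.prod_restrict, integral_prod _ hint,
    integral_integral_swap hint, ← integral_Ioc_eq_integral_Ioo,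
    ← intervalIntegral.integral_of_le hab]
  simp only [← intervalIntegral.integral_of_le hT.le,
    integral_mul_comp_add_sub_eq_correlation hp hq]
  rw [intervalIntegral.integral_comp_mul_left _ (by norm_num : (-2 : ℝ) ≠ 0),
    intervalIntegral.integral_symm, smul_neg, ← neg_smul, ← inv_neg, neg_neg, neg_mul, neg_mul]

end

theorem stmt_4_general (p q : ℝ → ℝ) (α : ℝ) (hα0 : 0 ≤ α) (hα1 : α < 1/2)
    (hp : Function.Periodic p (2 * π)) (hq : Function.Periodic q (2 * π))
    (hpint : IntegrableOn p (Ioc 0 (2 * π))) (hqint : IntegrableOn q (Ioc 0 (2 * π))) :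
    (∫ z in (Ioc 0 (2 * π)) ×ˢ (Ioo (α * π) (π - α * π)), p (z.1 + z.2) * q (z.1 - z.2)) =
      (1/2) * (∫ s in Ioc 0 (2 * π), p s) * (∫ s in Ioc 0 (2 * π), q s)
        - (1/2) * ∫ z in Ioc (-(2 * α * π)) (2 * α * π), ∫ y in Ioc 0 (2 * π), p y * q (z + y) := by
  have hT : 0 < 2 * π := by positivity
  have hpi := (intervalIntegrable_iff_integrableOn_Ioc_of_le hT.le).2 hpint
  have hqi := (intervalIntegrable_iff_integrableOn_Ioc_of_le hT.le).2 hqint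
  have hsymm : -(2 * α * π) ≤ 2 * α * π := by nlinarith [pi_pos]
  rw [setIntegral_prod_Ioo_eq_correlation hT hp hq hpi hqi (by nlinarith [pi_pos]),
    show -(2 * (π - α * π)) = 2 * α * π - 2 * π by ring,
    show -(2 * (α * π)) = -(2 * α * π) by ring,
    hq.correlation.intervalIntegral_eq_sub_intervalIntegral_symm
      (intervalIntegrable_correlation hT hq hpi hqi),
    integral_correlation hT hq hpi hqi]
  simp only [← intervalIntegral.integral_of_le hT.le, ← intervalIntegral.integral_of_le hsymm,
    correlation, smul_eq_mul]
  ring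

theorem stmt_4 (p q : ℝ → ℝ) (α : ℝ) (hα0 : 0 ≤ α) (hα1 : α < 1/2)
    (hp : Function.Periodic p (2 * π)) (hq : Function.Periodic q (2 * π))
    (hpm : Measurable p) (hqm : Measurable q)
    (hpint : IntegrableOn p (Ioc 0 (2 * π))) (hqint : IntegrableOn q (Ioc 0 (2 * π))) :
    (∫ z in (Ioc 0 (2 * π)) ×ˢ (Ioo (α * π) (π - α * π)), p (z.1 + z.2) * q (z.1 - z.2)) =
      (1/2) * (∫ s in Ioc 0 (2 * π), p s) * (∫ s in Ioc 0 (2 * π), q s)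
        - (1/2) * ∫ z in Ioc (-(2 * α * π)) (2 * α * π), ∫ y in Ioc 0 (2 * π), p y * q (z + y) :=
  stmt_4_general p q α hα0 hα1 hp hq hpint hqint
end

section
/- Let v̂ ∈ L²(𝕋) and v(t,x) := v̂(t+x) - v̂(t-x) on Ω := 𝕋 × (0,π). If v̂ has zero average over [0,2π], then ‖v‖²_{L²(Ω)} = 2π ‖v̂‖²_{L²(𝕋)}. -/
/-!
Expand the square. Each square term contributes `π ∫ v̂²`, since translating a periodic function
does not change its integral over a period. In the cross term the substitution `s = t - x` turns
`∫ v̂(t + x) v̂(t - x) dt` into the autocorrelation `C(2x) = ∫ v̂(s + 2x) v̂(s) ds`; averaging over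
`x ∈ (0, π)` gives `½ ∫₀^{2π} C = ½ ∫ v̂(s) (∫ v̂(s + u) du) ds` by Fubini, and the inner integral
is the average of `v̂`, which is zero.
-/

open MeasureTheory Real Set

lemma integrable_mul_of_integrable_sq {α : Type*} [MeasurableSpace α] {μ : Measure α}
    {f g : α → ℝ} (hf : AEStronglyMeasurable f μ) (hg : AEStronglyMeasurable g μ)
    (hf2 : Integrable (fun x => f x ^ 2) μ) (hg2 : Integrable (fun x => g x ^ 2) μ) :
    Integrable (fun x => f x * g x) μ :=
  ((memLp_two_iff_integrable_sq hf).2 hf2).integrable_mul ((memLp_two_iff_integrable_sq hg).2 hg2)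

namespace Function.Periodic

section

variable {E : Type*} [NormedAddCommGroup E] {f : ℝ → E} {T : ℝ}

lemma integrableOn_Ioc_comp_add_right (hf : Periodic f T) (hT : 0 < T)
    (h : IntegrableOn f (Ioc 0 T)) (c : ℝ) : IntegrableOn (fun x => f (x + c)) (Ioc 0 T) := by
  rw [← intervalIntegrable_iff_integrableOn_Ioc_of_le hT.le] at h ⊢
  simpa using (hf.intervalIntegrable₀ hT.ne' h c (T + c)).comp_add_right c

lemma setIntegral_Ioc_comp_add_right [NormedSpace ℝ E] (hf : Periodic f T) (hT : 0 < T) (c : ℝ) :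
    ∫ x in Ioc 0 T, f (x + c) = ∫ x in Ioc 0 T, f x := by
  rw [← intervalIntegral.integral_of_le hT.le, ← intervalIntegral.integral_of_le hT.le,
    intervalIntegral.integral_comp_add_right]
  simpa [add_comm] using hf.intervalIntegral_add_eq c 0

variable (ν : Measure ℝ) [IsFiniteMeasure ν]

lemma integrable_prod_comp_add_mul (hf : Periodic f T) (hT : 0 < T)
    (hmeas : StronglyMeasurable f) (h : IntegrableOn f (Ioc 0 T)) (c : ℝ) :
    Integrable (fun z : ℝ × ℝ => f (z.1 + c * z.2)) ((volume.restrict (Ioc 0 T)).prod ν) := by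
  have hmeas' : StronglyMeasurable fun z : ℝ × ℝ => f (z.1 + c * z.2) :=
    hmeas.comp_measurable (measurable_fst.add (measurable_snd.const_mul c))
  rw [integrable_prod_iff' hmeas'.aestronglyMeasurable]
  refine ⟨.of_forall fun y => hf.integrableOn_Ioc_comp_add_right hT h (c * y), ?_⟩
  have hnorm (y : ℝ) : ∫ x in Ioc 0 T, ‖f (x + c * y)‖ = ∫ x in Ioc 0 T, ‖f x‖ :=
    (hf.comp norm).setIntegral_Ioc_comp_add_right hT (c * y)
  simp only [hnorm]
  exact integrable_const _

lemma integral_prod_comp_add_mul [NormedSpace ℝ E] [CompleteSpace E] (hf : Periodic f T)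
    (hT : 0 < T) (hmeas : StronglyMeasurable f) (h : IntegrableOn f (Ioc 0 T)) (c : ℝ) :
    ∫ z, f (z.1 + c * z.2) ∂((volume.restrict (Ioc 0 T)).prod ν) =
      ν.real univ • ∫ x in Ioc 0 T, f x := by
  rw [integral_prod_symm _ (hf.integrable_prod_comp_add_mul ν hT hmeas h c)]
  simp only [hf.setIntegral_Ioc_comp_add_right hT]
  exact integral_const _

end

section Real

variable {f : ℝ → ℝ}

lemma integrable_prod_mul_comp_add_mul {T : ℝ} (ν : Measure ℝ) [IsFiniteMeasure ν]
    (hf : Periodic f T) (hT : 0 < T) (hmeas : Measurable f)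
    (hL2 : IntegrableOn (fun x => f x ^ 2) (Ioc 0 T)) (a b : ℝ) :
    Integrable (fun z : ℝ × ℝ => f (z.1 + a * z.2) * f (z.1 + b * z.2))
      ((volume.restrict (Ioc 0 T)).prod ν) := by
  have hsq : Periodic (fun x => f x ^ 2) T := fun x => by simp only [hf x]
  have hcomp (c : ℝ) : Measurable fun z : ℝ × ℝ => f (z.1 + c * z.2) :=
    hmeas.comp (measurable_fst.add (measurable_snd.const_mul c))
  exact integrable_mul_of_integrable_sq (hcomp a).aestronglyMeasurable
    (hcomp b).aestronglyMeasurable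
    (hsq.integrable_prod_comp_add_mul ν hT (hmeas.pow_const 2).stronglyMeasurable hL2 a)
    (hsq.integrable_prod_comp_add_mul ν hT (hmeas.pow_const 2).stronglyMeasurable hL2 b)

lemma setIntegral_Ioc_setIntegral_Ioc_comp_add_mul_eq_zero {T : ℝ} (hf : Periodic f T) (hT : 0 < T)
    (hmeas : Measurable f) (hL2 : IntegrableOn (fun x => f x ^ 2) (Ioc 0 T))
    (havg : ∫ x in Ioc 0 T, f x = 0) :
    ∫ u in Ioc 0 T, ∫ s in Ioc 0 T, f (s + u) * f s = 0 := by
  have hint := hf.integrable_prod_mul_comp_add_mul (volume.restrict (Ioc 0 T)) hT hmeas hL2 1 0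
  simp only [one_mul, zero_mul, add_zero] at hint
  rw [← integral_prod_symm _ hint, integral_prod _ hint]
  have hinner (s : ℝ) : ∫ u in Ioc 0 T, f (s + u) * f s = 0 := by
    simp only [integral_mul_const, add_comm s, hf.setIntegral_Ioc_comp_add_right hT, havg,
      zero_mul]
  simp only [hinner, integral_zero]

lemma integral_prod_mul_comp_add_comp_sub_eq_zero {L : ℝ} (hf : Periodic f (2 * L)) (hL : 0 < L)
    (hmeas : Measurable f) (hL2 : IntegrableOn (fun x => f x ^ 2) (Ioc 0 (2 * L)))
    (havg : ∫ x in Ioc 0 (2 * L), f x = 0) :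
    ∫ z, f (z.1 + z.2) * f (z.1 - z.2)
      ∂((volume.restrict (Ioc 0 (2 * L))).prod (volume.restrict (Ioo 0 L))) = 0 := by
  have h2L : 0 < 2 * L := by positivity
  have hint := hf.integrable_prod_mul_comp_add_mul (volume.restrict (Ioo 0 L)) h2L hmeas hL2 1 (-1)
  simp only [one_mul, neg_one_mul, ← sub_eq_add_neg] at hint
  have hinner (y : ℝ) : ∫ x in Ioc 0 (2 * L), f (x + y) * f (x - y) =
      ∫ s in Ioc 0 (2 * L), f (s + 2 * y) * f s := by
    have hper : Periodic (fun s => f (s + 2 * y) * f s) (2 * L) := (hf.add_const _).mul hf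
    rw [← hper.setIntegral_Ioc_comp_add_right h2L (-y)]
    congr! 3 with x
    ring_nf
  rw [integral_prod_symm _ hint]
  simp only [hinner]
  rw [← integral_Ioc_eq_integral_Ioo, ← intervalIntegral.integral_of_le hL.le,
    intervalIntegral.integral_comp_mul_left
      (fun u => ∫ s in Ioc 0 (2 * L), f (s + u) * f s) two_ne_zero, mul_zero,
    intervalIntegral.integral_of_le h2L.le,
    hf.setIntegral_Ioc_setIntegral_Ioc_comp_add_mul_eq_zero h2L hmeas hL2 havg, smul_zero]

lemma integral_prod_sq_comp_add_sub_comp_sub {L : ℝ} (hf : Periodic f (2 * L)) (hL : 0 < L)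
    (hmeas : Measurable f) (hL2 : IntegrableOn (fun x => f x ^ 2) (Ioc 0 (2 * L)))
    (havg : ∫ x in Ioc 0 (2 * L), f x = 0) :
    ∫ z, (f (z.1 + z.2) - f (z.1 - z.2)) ^ 2
      ∂((volume.restrict (Ioc 0 (2 * L))).prod (volume.restrict (Ioo 0 L))) =
      2 * L * ∫ x in Ioc 0 (2 * L), f x ^ 2 := by
  have h2L : 0 < 2 * L := by positivity
  have hsq : Periodic (fun x => f x ^ 2) (2 * L) := fun x => by simp only [hf x]
  have hsq_meas : StronglyMeasurable fun x => f x ^ 2 := (hmeas.pow_const 2).stronglyMeasurable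
  set ν := volume.restrict (Ioo 0 L)
  have hadd_int := hsq.integrable_prod_comp_add_mul ν h2L hsq_meas hL2 1
  have hsub_int := hsq.integrable_prod_comp_add_mul ν h2L hsq_meas hL2 (-1)
  have hadd := hsq.integral_prod_comp_add_mul ν h2L hsq_meas hL2 1
  have hsub := hsq.integral_prod_comp_add_mul ν h2L hsq_meas hL2 (-1)
  have hcross_int := hf.integrable_prod_mul_comp_add_mul ν h2L hmeas hL2 1 (-1)
  simp only [one_mul, neg_one_mul, ← sub_eq_add_neg] at hadd_int hsub_int hadd hsub hcross_int
  have hexpand : (fun z : ℝ × ℝ => (f (z.1 + z.2) - f (z.1 - z.2)) ^ 2) =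
      fun z => f (z.1 + z.2) ^ 2 + f (z.1 - z.2) ^ 2 - 2 * (f (z.1 + z.2) * f (z.1 - z.2)) := by
    ext z; ring
  rw [hexpand, integral_sub (by exact hadd_int.add hsub_int) (hcross_int.const_mul 2),
    integral_add hadd_int hsub_int, integral_const_mul, hadd, hsub,
    hf.integral_prod_mul_comp_add_comp_sub_eq_zero hL hmeas hL2 havg]
  rw [measureReal_restrict_apply_univ, Real.volume_real_Ioo_of_le hL.le, smul_eq_mul]
  ring

end Real

end Function.Periodic

theorem stmt_7 (vh : ℝ → ℝ) (hper : Function.Periodic vh (2 * π)) (hmeas : Measurable vh)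
    (hL2 : IntegrableOn (fun s => (vh s) ^ 2) (Ioc 0 (2 * π)))
    (havg : ∫ s in Ioc 0 (2 * π), vh s = 0) :
    (∫ z in (Ioc 0 (2 * π)) ×ˢ (Ioo 0 π), (vh (z.1 + z.2) - vh (z.1 - z.2)) ^ 2) =
      2 * π * ∫ s in Ioc 0 (2 * π), (vh s) ^ 2 := by
  rw [Measure.volume_eq_prod, ← Measure.prod_restrict]
  exact hper.integral_prod_sq_comp_add_sub_comp_sub pi_pos hmeas hL2 havg
end

section
/- Let v̂ : 𝕋 → ℝ be essentially bounded with zero average and v(t,x) := v̂(t+x) - v̂(t-x) on Ω := 𝕋 × (0,π). Then ‖v̂‖_{L^∞(𝕋)} ≤ ‖v‖_{L^∞(Ω)} ≤ 2‖v̂‖_{L^∞(𝕋)}. -/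
/-!
Periodicity makes the essential supremum of `v̂` over one period equal to its global one, and
`v(t, x)` is a difference of two values of `v̂`, whence the upper bound. For the lower bound, the
shear `(t, x) ↦ (t - x, x)` turns `v` into `v̂ t - v̂ (t - 2x)`; as `x` runs over `(0, π)`,
`t - 2x` sweeps a full period, on which `v̂` has mean zero, so `v̂ t` is the mean over `x` of
these differences and is bounded by `‖v‖_∞` for almost every `t`.
-/

open MeasureTheory Real Set
open scoped ENNReal

theorem ae_enorm_le_eLpNorm_top {α ε : Type*} [MeasurableSpace α] [ENorm ε] (f : α → ε)
    (μ : Measure α) : ∀ᵐ x ∂μ, ‖f x‖ₑ ≤ eLpNorm f ⊤ μ := by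
  rw [eLpNorm_exponent_top]
  exact ae_le_eLpNormEssSup

theorem eLpNorm_top_le_of_ae_enorm_le {α ε : Type*} [MeasurableSpace α] [ENorm ε] {f : α → ε}
    {μ : Measure α} {C : ℝ≥0∞} (h : ∀ᵐ x ∂μ, ‖f x‖ₑ ≤ C) : eLpNorm f ⊤ μ ≤ C := by
  rw [eLpNorm_exponent_top]
  exact eLpNormEssSup_le_of_ae_enorm_bound h

theorem Function.Periodic.ae_of_ae_restrict_Ioc {T : ℝ} (hT : 0 < T) {p : ℝ → Prop}
    (hp : Function.Periodic p T) (h : ∀ᵐ s ∂volume.restrict (Ioc 0 T), p s) : ∀ᵐ s, p s := by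
  rw [ae_iff, Measure.restrict_apply' measurableSet_Ioc] at h
  refine (isAddFundamentalDomain_Ioc hT 0).measure_zero_of_invariant _ (fun ⟨g, n, hn⟩ => ?_)
    (by simpa using h)
  ext s
  subst hn
  simp only [mem_vadd_set_iff_neg_vadd_mem, mem_ofPred_eq, AddSubgroup.vadd_def, vadd_eq_add,
    AddSubgroup.coe_neg, add_comm _ s, (hp.zsmul n).neg s]

theorem Function.Periodic.ae_prod_of_ae_restrict_Ioc_prod {T : ℝ} (hT : 0 < T) {X : Type*}
    [MeasurableSpace X] {ν : Measure X} [SFinite ν] {p : ℝ → X → Prop}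
    (hp : Function.Periodic p T) (hmeas : MeasurableSet {z : ℝ × X | p z.1 z.2})
    (h : ∀ᵐ z ∂(volume.restrict (Ioc 0 T)).prod ν, p z.1 z.2) :
    ∀ᵐ z ∂volume.prod ν, p z.1 z.2 := by
  have hfiber : Function.Periodic (fun t => ∀ᵐ x ∂ν, p t x) T := fun t => by simp only [hp t]
  rw [Measure.ae_prod_iff_ae_ae hmeas] at h ⊢
  exact hfiber.ae_of_ae_restrict_Ioc hT h

theorem Function.Periodic.eLpNorm_top_restrict_Ioc {E : Type*} [NormedAddCommGroup E]
    {f : ℝ → E} {T : ℝ} (hT : 0 < T) (hf : Function.Periodic f T) :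
    eLpNorm f ⊤ (volume.restrict (Ioc 0 T)) = eLpNorm f ⊤ volume := by
  have hnorm : Function.Periodic (fun s => ‖f s‖ₑ ≤ eLpNorm f ⊤ (volume.restrict (Ioc 0 T))) T :=
    fun s => by simp only [hf s]
  exact le_antisymm (eLpNorm_mono_measure f Measure.restrict_le_self)
    (eLpNorm_top_le_of_ae_enorm_le (hnorm.ae_of_ae_restrict_Ioc hT (ae_enorm_le_eLpNorm_top f _)))

theorem eLpNorm_top_comp_add_sub_comp_sub_le {E : Type*} [NormedAddCommGroup E] (f : ℝ → E)
    {μ : Measure (ℝ × ℝ)} (hμ : μ ≪ volume) :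
    eLpNorm (fun z : ℝ × ℝ => f (z.1 + z.2) - f (z.1 - z.2)) ⊤ μ ≤ 2 * eLpNorm f ⊤ volume := by
  have hf := ae_enorm_le_eLpNorm_top f volume
  rw [Measure.volume_eq_prod] at hμ
  have hadd := (quasiMeasurePreserving_add volume volume).ae hf
  have hsub := (quasiMeasurePreserving_sub volume volume).ae hf
  refine eLpNorm_top_le_of_ae_enorm_le (hμ.ae_le ?_)
  filter_upwards [hadd, hsub] with z h₁ h₂
  calc ‖f (z.1 + z.2) - f (z.1 - z.2)‖ₑ ≤ ‖f (z.1 + z.2)‖ₑ + ‖f (z.1 - z.2)‖ₑ := enorm_sub_le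
    _ ≤ eLpNorm f ⊤ volume + eLpNorm f ⊤ volume := add_le_add h₁ h₂
    _ = 2 * eLpNorm f ⊤ volume := (two_mul _).symm

theorem Function.Periodic.intervalIntegral_comp_sub_mul {E : Type*} [NormedAddCommGroup E]
    [NormedSpace ℝ E] {f : ℝ → E} {a c : ℝ} (hc : c ≠ 0) (hf : Function.Periodic f (c * a))
    (s : ℝ) : ∫ x in 0..a, f (s - c * x) = c⁻¹ • ∫ x in 0..c * a, f x := by
  rw [intervalIntegral.integral_comp_mul_left (fun y => f (s - y)) hc,
    intervalIntegral.integral_comp_sub_left, mul_zero, sub_zero]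
  simpa using congrArg (c⁻¹ • ·) (hf.intervalIntegral_add_eq (s - c * a) 0)

theorem enorm_le_of_ae_enorm_sub_le_of_integral_eq_zero {α E : Type*} [MeasurableSpace α]
    [NormedAddCommGroup E] [NormedSpace ℝ E] [CompleteSpace E] {μ : Measure α}
    [IsFiniteMeasure μ] (hμ : μ ≠ 0) {g : α → E} {c : E} {C : ℝ≥0∞}
    (hg : AEStronglyMeasurable g μ) (hg₀ : ∫ x, g x ∂μ = 0)
    (h : ∀ᵐ x ∂μ, ‖c - g x‖ₑ ≤ C) : ‖c‖ₑ ≤ C := by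
  rcases eq_or_ne C ⊤ with rfl | hC
  · exact le_top
  lift C to NNReal using hC
  have hint : Integrable (fun x => c - g x) μ :=
    (memLp_top_of_bound_enorm (aestronglyMeasurable_const.sub hg) C h).integrable le_top
  have hmean : ∫ x, (c - g x) ∂μ = μ.real univ • c := by
    rw [integral_sub (integrable_const c) (((integrable_const c).sub hint).congr
      (.of_forall fun x => sub_sub_cancel c (g x))), hg₀, integral_const, sub_zero]
  have hmass : μ univ * ‖c‖ₑ ≤ μ univ * C := calc
    μ univ * ‖c‖ₑ = ‖∫ x, (c - g x) ∂μ‖ₑ := by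
      rw [hmean, enorm_smul, Real.enorm_of_nonneg measureReal_nonneg, measureReal_def,
        ENNReal.ofReal_toReal (measure_ne_top _ _)]
    _ ≤ ∫⁻ x, ‖c - g x‖ₑ ∂μ := enorm_integral_le_lintegral_enorm _
    _ ≤ ∫⁻ _, (C : ℝ≥0∞) ∂μ := lintegral_mono_ae h
    _ = μ univ * C := by rw [lintegral_const, mul_comm]
  exact (ENNReal.mul_le_mul_iff_right (by simpa using hμ) (measure_ne_top _ _)).1 hmass

theorem eLpNorm_top_le_eLpNorm_top_comp_add_sub_comp_sub {f : ℝ → ℝ} {a : ℝ} (ha : 0 < a)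
    (hf : Function.Periodic f (2 * a)) (hmeas : Measurable f)
    (havg : ∫ s in Ioc 0 (2 * a), f s = 0) :
    eLpNorm f ⊤ volume ≤ eLpNorm (fun z : ℝ × ℝ => f (z.1 + z.2) - f (z.1 - z.2)) ⊤
      (volume.restrict (Ioc 0 (2 * a) ×ˢ Ioo 0 a)) := by
  set N := eLpNorm (fun z : ℝ × ℝ => f (z.1 + z.2) - f (z.1 - z.2)) ⊤
    (volume.restrict (Ioc 0 (2 * a) ×ˢ Ioo 0 a))
  set ν := volume.restrict (Ioo 0 a)
  have h_period : ∀ᵐ z ∂(volume.restrict (Ioc 0 (2 * a))).prod ν,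
      ‖f (z.1 + z.2) - f (z.1 - z.2)‖ₑ ≤ N := by
    rw [Measure.prod_restrict, ← Measure.volume_eq_prod]
    exact ae_enorm_le_eLpNorm_top _ _
  have h_strip : ∀ᵐ z ∂volume.prod ν, ‖f (z.1 + z.2) - f (z.1 - z.2)‖ₑ ≤ N :=
    Function.Periodic.ae_prod_of_ae_restrict_Ioc_prod
      (p := fun t x => ‖f (t + x) - f (t - x)‖ₑ ≤ N) (by positivity)
      (fun t => funext fun x => by simp only [add_right_comm t, add_sub_right_comm t, hf _])
      (measurableSet_le (by fun_prop) measurable_const) h_period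
  have h_shear : ∀ᵐ z ∂volume.prod ν, ‖f z.1 - f (z.1 - 2 * z.2)‖ₑ ≤ N := by
    filter_upwards [(measurePreserving_sub_prod volume ν).quasiMeasurePreserving.ae h_strip]
      with z hz
    simpa only [sub_add_cancel, sub_sub, ← two_mul] using hz
  have h_mean (t : ℝ) : ∫ x in Ioo 0 a, f (t - 2 * x) = 0 := by
    rw [← integral_Ioc_eq_integral_Ioo, ← intervalIntegral.integral_of_le ha.le,
      hf.intervalIntegral_comp_sub_mul two_ne_zero, intervalIntegral.integral_of_le (by positivity),
      havg, smul_zero]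
  have h_pointwise : ∀ᵐ t, ‖f t‖ₑ ≤ N := by
    filter_upwards [Measure.ae_ae_of_ae_prod h_shear] with t ht
    exact enorm_le_of_ae_enorm_sub_le_of_integral_eq_zero (by simp [ha])
      (hmeas.comp (by fun_prop)).aestronglyMeasurable (h_mean t) ht
  exact eLpNorm_top_le_of_ae_enorm_le h_pointwise

theorem stmt_8_general (vh : ℝ → ℝ) (hper : Function.Periodic vh (2 * π)) (hmeas : Measurable vh)
    (havg : ∫ s in Ioc 0 (2 * π), vh s = 0) :
    eLpNorm vh ⊤ (volume.restrict (Ioc 0 (2 * π))) ≤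
        eLpNorm (fun z : ℝ × ℝ => vh (z.1 + z.2) - vh (z.1 - z.2)) ⊤
          (volume.restrict ((Ioc 0 (2 * π)) ×ˢ (Ioo 0 π))) ∧
      eLpNorm (fun z : ℝ × ℝ => vh (z.1 + z.2) - vh (z.1 - z.2)) ⊤
          (volume.restrict ((Ioc 0 (2 * π)) ×ˢ (Ioo 0 π))) ≤
        2 * eLpNorm vh ⊤ (volume.restrict (Ioc 0 (2 * π))) := by
  rw [hper.eLpNorm_top_restrict_Ioc (by positivity)]
  exact ⟨eLpNorm_top_le_eLpNorm_top_comp_add_sub_comp_sub pi_pos hper hmeas havg,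
    eLpNorm_top_comp_add_sub_comp_sub_le vh Measure.restrict_le_self.absolutelyContinuous⟩

theorem stmt_8 (vh : ℝ → ℝ) (hper : Function.Periodic vh (2 * π)) (hmeas : Measurable vh)
    (hbdd : eLpNorm vh ⊤ (volume.restrict (Ioc 0 (2 * π))) < ⊤)
    (havg : ∫ s in Ioc 0 (2 * π), vh s = 0) :
    eLpNorm vh ⊤ (volume.restrict (Ioc 0 (2 * π))) ≤
        eLpNorm (fun z : ℝ × ℝ => vh (z.1 + z.2) - vh (z.1 - z.2)) ⊤
          (volume.restrict ((Ioc 0 (2 * π)) ×ˢ (Ioo 0 π))) ∧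
      eLpNorm (fun z : ℝ × ℝ => vh (z.1 + z.2) - vh (z.1 - z.2)) ⊤
          (volume.restrict ((Ioc 0 (2 * π)) ×ˢ (Ioo 0 π))) ≤
        2 * eLpNorm vh ⊤ (volume.restrict (Ioc 0 (2 * π))) :=
  stmt_8_general vh hper hmeas havg
end

section
/- Let φ₁, …, φ_{2k+1} be functions on Ω := 𝕋 × (0,π) of the form φ_j(t,x) = φ̂_j(t+x) - φ̂_j(t-x) with φ̂_j 2π-periodic, and assume the product φ₁⋯φ_{2k+1} is integrable on Ω_α for 0 ≤ α < 1/2. Then ∫_{Ω_α} φ₁⋯φ_{2k+1} = 0. -/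
/-!
Write `g t x = ∏ⱼ (φ̂ⱼ(t + x) - φ̂ⱼ(t - x))`. By `2π`-periodicity each factor changes sign under
`(t, x) ↦ (t + π, π - x)`, so for an odd number of factors `g (t + π) (π - x) = -g t x`. The strip
`απ < x < π - απ` is symmetric under `x ↦ π - x`, hence the inner integral `H t = ∫ g t x dx` is
`π`-antiperiodic, and an antiperiodic function integrates to zero over a full period `2π`.
-/

open MeasureTheory Real Set

lemma prod_neg_of_odd_card {ι M : Type*} [Fintype ι] [CommMonoid M] [HasDistribNeg M]
    (h : Odd (Fintype.card ι)) (f : ι → M) : ∏ i, -f i = -∏ i, f i := by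
  rw [Finset.prod_neg, Finset.card_univ, h.neg_one_pow, neg_one_mul]

lemma Function.Periodic.wave_half_period_reflect {f : ℝ → ℝ} {p : ℝ}
    (hf : Function.Periodic f (2 * p)) (t x : ℝ) :
    f (t + p + (p - x)) - f (t + p - (p - x)) = -(f (t + x) - f (t - x)) := by
  rw [show t + p + (p - x) = t - x + 2 * p by ring, show t + p - (p - x) = t + x by ring, hf]
  ring

section

variable {E : Type*} [NormedAddCommGroup E] [NormedSpace ℝ E]

lemma setIntegral_Ioo_comp_add_sub (f : ℝ → E) (a b : ℝ) :
    ∫ x in Ioo a b, f (a + b - x) = ∫ x in Ioo a b, f x := by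
  rcases le_or_gt a b with hab | hab
  · rw [← integral_Ioc_eq_integral_Ioo, ← integral_Ioc_eq_integral_Ioo,
      ← intervalIntegral.integral_of_le hab, ← intervalIntegral.integral_of_le hab,
      intervalIntegral.integral_comp_sub_left, add_sub_cancel_right, add_sub_cancel_left]
  · simp [Ioo_eq_empty_of_le hab.le]

/-- The shift by `p` both negates the integral and, by `2p`-periodicity, preserves it. -/
lemma Function.Antiperiodic.intervalIntegral_eq_zero {f : ℝ → E} {p : ℝ}
    (hf : Function.Antiperiodic f p) (a : ℝ) : ∫ t in a..a + 2 * p, f t = 0 := by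
  have hshift : ∫ t in a..a + 2 * p, f (t + p) = ∫ t in a..a + 2 * p, f t := by
    rw [intervalIntegral.integral_comp_add_right, show a + 2 * p + p = a + p + 2 * p by ring,
      hf.periodic_two_mul.intervalIntegral_add_eq (a + p) a]
  have hneg : ∫ t in a..a + 2 * p, f (t + p) = -∫ t in a..a + 2 * p, f t := by
    simp only [hf _, intervalIntegral.integral_neg]
  have htwice : (2 : ℝ) • ∫ t in a..a + 2 * p, f t = 0 := by
    rw [two_smul]
    nth_rewrite 1 [← hshift, hneg]
    exact neg_add_cancel _
  exact (smul_eq_zero.mp htwice).resolve_left two_ne_zero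

lemma setIntegral_Ioc_prod_Ioo_eq_zero_of_antisymm {g : ℝ → ℝ → E} {p a b : ℝ} (hp : 0 ≤ p)
    (hg : ∀ t x, g (t + p) (a + b - x) = -g t x)
    (hint : IntegrableOn (fun z : ℝ × ℝ => g z.1 z.2) (Ioc 0 (2 * p) ×ˢ Ioo a b)) :
    ∫ z in Ioc 0 (2 * p) ×ˢ Ioo a b, g z.1 z.2 = 0 := by
  have hanti : Function.Antiperiodic (fun t => ∫ x in Ioo a b, g t x) p := fun t => by
    dsimp only
    rw [← setIntegral_Ioo_comp_add_sub, ← integral_neg]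
    simp only [hg]
  rw [Measure.volume_eq_prod, setIntegral_prod _ hint,
    ← intervalIntegral.integral_of_le (by positivity), ← zero_add (2 * p)]
  exact hanti.intervalIntegral_eq_zero 0

end

theorem stmt_11_general (k : ℕ) (φh : Fin (2 * k + 1) → ℝ → ℝ) (α : ℝ)
    (hper : ∀ j, Function.Periodic (φh j) (2 * π))
    (hint : IntegrableOn
      (fun z : ℝ × ℝ => ∏ j : Fin (2 * k + 1), (φh j (z.1 + z.2) - φh j (z.1 - z.2)))
      ((Ioc 0 (2 * π)) ×ˢ (Ioo (α * π) (π - α * π)))) :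
    (∫ z in (Ioc 0 (2 * π)) ×ˢ (Ioo (α * π) (π - α * π)),
      ∏ j : Fin (2 * k + 1), (φh j (z.1 + z.2) - φh j (z.1 - z.2))) = 0 := by
  refine setIntegral_Ioc_prod_Ioo_eq_zero_of_antisymm (g := fun t x =>
    ∏ j : Fin (2 * k + 1), (φh j (t + x) - φh j (t - x))) pi_pos.le (fun t x => ?_) hint
  rw [show α * π + (π - α * π) = π by ring]
  simp only [(hper _).wave_half_period_reflect]
  exact prod_neg_of_odd_card (by simp) _

theorem stmt_11 (k : ℕ) (φh : Fin (2 * k + 1) → ℝ → ℝ) (α : ℝ)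
    (hα0 : 0 ≤ α) (hα1 : α < 1/2)
    (hper : ∀ j, Function.Periodic (φh j) (2 * π))
    (hmeas : ∀ j, Measurable (φh j))
    (hint : IntegrableOn
      (fun z : ℝ × ℝ => ∏ j : Fin (2 * k + 1), (φh j (z.1 + z.2) - φh j (z.1 - z.2)))
      ((Ioc 0 (2 * π)) ×ˢ (Ioo (α * π) (π - α * π)))) :
    (∫ z in (Ioc 0 (2 * π)) ×ˢ (Ioo (α * π) (π - α * π)),
      ∏ j : Fin (2 * k + 1), (φh j (z.1 + z.2) - φh j (z.1 - z.2))) = 0 :=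
  stmt_11_general k φh α hper hint
end

section
/- Let a : (0,π) × ℝ → ℝ be continuous with a(x,-u) = a(x,u) and a(π-x,u) = a(x,u) for all x, u. Let v, φ be functions on Ω := 𝕋 × (0,π) of the form v(t,x) = v̂(t+x) - v̂(t-x), φ(t,x) = φ̂(t+x) - φ̂(t-x) with v̂ ∈ L^∞(𝕋), φ̂ ∈ L¹(𝕋) both 2π-periodic. Then ∫_Ω a(x, v(t,x)) φ(t,x) dt dx = 0. -/
open MeasureTheory Real Set

/-!
The half-turn `(t, x) ↦ (t + π, π - x)` of `𝕋 × (0, π)` preserves the measure and exchanges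
`t + x` and `t - x` modulo `2π`, so it changes the sign of both `v` and `φ`. By the evenness of `a`
in `u` and its symmetry in `x`, the integrand is odd under this half-turn, so its integral vanishes.
-/

theorem integral_eq_zero_of_comp_ae_eq_neg {α E : Type*} [MeasurableSpace α]
    [NormedAddCommGroup E] [NormedSpace ℝ E] {μ : Measure α} {φ : α → α} {f : α → E}
    (hφ : MeasurePreserving φ μ μ) (hf : f ∘ φ =ᵐ[μ] -f) : ∫ x, f x ∂μ = 0 := by
  by_cases hint : Integrable f μ
  · have hcomp : ∫ x, f (φ x) ∂μ = ∫ x, f x ∂μ := by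
      rw [← integral_map hφ.aemeasurable (by rw [hφ.map_eq]; exact hint.aestronglyMeasurable),
        hφ.map_eq]
    have hself_neg : ∫ x, f x ∂μ = -∫ x, f x ∂μ :=
      calc ∫ x, f x ∂μ = ∫ x, f (φ x) ∂μ := hcomp.symm
        _ = ∫ x, -f x ∂μ := integral_congr_ae hf
        _ = -∫ x, f x ∂μ := integral_neg f
    rw [eq_neg_iff_add_eq_zero, ← two_smul ℝ] at hself_neg
    exact (smul_eq_zero.mp hself_neg).resolve_left two_ne_zero
  · exact integral_undef hint

theorem measurePreserving_toIocMod_add {p : ℝ} (hp : 0 < p) (a c : ℝ) :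
    MeasurePreserving (fun t => toIocMod hp a (t + c)) (volume.restrict (Ioc a (a + p)))
      (volume.restrict (Ioc a (a + p))) := by
  have := Fact.mk hp
  convert (measurePreserving_subtype_coe measurableSet_Ioc).comp
    ((AddCircle.measurePreserving_equivIoc p (a := a)).comp
      ((measurePreserving_add_right volume (c : AddCircle p)).comp
        (AddCircle.measurePreserving_mk p a))) using 1
  funext t
  rw [Function.comp_apply, Function.comp_apply, Function.comp_apply, ← AddCircle.coe_add]
  rfl

theorem Function.Periodic.apply_toIocMod_add {α : Type*} {f : ℝ → α} {p : ℝ} (hf : Function.Periodic f p)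
    (hp : 0 < p) (a b y : ℝ) : f (toIocMod hp a b + y) = f (b + y) := by
  rw [toIocMod, sub_add_eq_add_sub, hf.sub_zsmul_eq]

theorem measurePreserving_const_sub_restrict_Ioo (a : ℝ) :
    MeasurePreserving (fun x => a - x) (volume.restrict (Ioo 0 a)) (volume.restrict (Ioo 0 a)) := by
  simpa [preimage_const_sub_Ioo] using
    (Measure.measurePreserving_sub_left volume a).restrict_preimage (s := Ioo 0 a) measurableSet_Ioo

theorem stmt_12_general (a : ℝ → ℝ → ℝ)
    (haeven : ∀ x u, a x (-u) = a x u)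
    (hasym : ∀ x u, a (π - x) u = a x u)
    (vh φh : ℝ → ℝ)
    (hvper : Function.Periodic vh (2 * π)) (hφper : Function.Periodic φh (2 * π)) :
    (∫ z in (Ioc 0 (2 * π)) ×ˢ (Ioo 0 π),
      a z.2 (vh (z.1 + z.2) - vh (z.1 - z.2)) * (φh (z.1 + z.2) - φh (z.1 - z.2))) = 0 := by
  set halfTurn : ℝ × ℝ → ℝ × ℝ := fun z => (toIocMod two_pi_pos 0 (z.1 + π), π - z.2)
  have hmp : MeasurePreserving halfTurn
      (volume.restrict (Ioc 0 (2 * π) ×ˢ Ioo 0 π)) (volume.restrict (Ioc 0 (2 * π) ×ˢ Ioo 0 π)) := by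
    rw [Measure.volume_eq_prod, ← Measure.prod_restrict]
    have := measurePreserving_toIocMod_add two_pi_pos 0 π
    rw [zero_add] at this
    exact this.prod (measurePreserving_const_sub_restrict_Ioo π)
  refine integral_eq_zero_of_comp_ae_eq_neg hmp (.of_forall fun z => ?_)
  have hsum (f : ℝ → ℝ) (hf : f.Periodic (2 * π)) :
      f (toIocMod two_pi_pos 0 (z.1 + π) + (π - z.2)) = f (z.1 - z.2) := by
    rw [hf.apply_toIocMod_add, show z.1 + π + (π - z.2) = z.1 - z.2 + 2 * π by ring, hf]
  have hdiff (f : ℝ → ℝ) (hf : f.Periodic (2 * π)) :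
      f (toIocMod two_pi_pos 0 (z.1 + π) - (π - z.2)) = f (z.1 + z.2) := by
    rw [sub_eq_add_neg, hf.apply_toIocMod_add, show z.1 + π + -(π - z.2) = z.1 + z.2 by ring]
  simp only [halfTurn, Function.comp_apply, Pi.neg_apply, hsum vh hvper, hdiff vh hvper,
    hsum φh hφper, hdiff φh hφper, hasym, ← neg_sub (vh (z.1 + z.2)), haeven]
  ring

theorem stmt_12 (a : ℝ → ℝ → ℝ)
    (hac : ContinuousOn (fun q : ℝ × ℝ => a q.1 q.2) ((Ioo 0 π) ×ˢ (univ : Set ℝ)))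
    (haeven : ∀ x u, a x (-u) = a x u)
    (hasym : ∀ x u, a (π - x) u = a x u)
    (vh φh : ℝ → ℝ)
    (hvper : Function.Periodic vh (2 * π)) (hφper : Function.Periodic φh (2 * π))
    (hvm : Measurable vh) (hφm : Measurable φh)
    (hvbdd : eLpNorm vh ⊤ (volume.restrict (Ioc 0 (2 * π))) < ⊤)
    (hφint : IntegrableOn φh (Ioc 0 (2 * π))) :
    (∫ z in (Ioc 0 (2 * π)) ×ˢ (Ioo 0 π),
      a z.2 (vh (z.1 + z.2) - vh (z.1 - z.2)) * (φh (z.1 + z.2) - φh (z.1 - z.2))) = 0 :=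
  stmt_12_general a haeven hasym vh φh hvper hφper
end

section
/- Let v̂ ∈ L²(𝕋) be 2π-periodic with zero average, v(t,x) := v̂(t+x) - v̂(t-x), and 0 ≤ α ≤ 1/8. Then ∫_{Ω_α} v² ≥ 2π(1 - 4α) ∫₀^{2π} v̂² ≥ π ∫₀^{2π} v̂², where Ω_α := 𝕋 × (απ, π-απ). -/
/-!
Write `C u = ∫₀ᵀ f t f (t - u) dt` for the autocorrelation of the `T`-periodic function `f` and
`‖f‖² = ∫₀ᵀ f²`. Periodicity gives `∫₀ᵀ (f (t + x) - f (t - x))² dt = 2‖f‖² - 2 C (2x)`.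
By AM–GM `|C| ≤ ‖f‖²`, and by Fubini and the zero mean of `f`, `∫₀ᵀ C = 0`. So the integral of `C`
over `[2a, T - 2a]` is minus its integral over the two complementary intervals of total length
`4a`, hence at most `4a‖f‖²`; integrating in `x` over `(a, T/2 - a)` gives the lower bound
`(T - 8a)‖f‖²`, and then one takes `T = 2π`, `a = απ`.
-/

open MeasureTheory Real Set Function intervalIntegral

section L2

variable {g h : ℝ → ℝ} {a b : ℝ}

lemma IntervalIntegrable.mul_of_sq (hg2 : IntervalIntegrable (fun x => g x ^ 2) volume a b)
    (hh2 : IntervalIntegrable (fun x => h x ^ 2) volume a b) (hg : AEStronglyMeasurable g volume)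
    (hh : AEStronglyMeasurable h volume) :
    IntervalIntegrable (fun x => g x * h x) volume a b := by
  rw [intervalIntegrable_iff] at *
  exact ((memLp_two_iff_integrable_sq hg.restrict).2 hg2).integrable_mul
    ((memLp_two_iff_integrable_sq hh.restrict).2 hh2)

lemma IntervalIntegrable.sq_sub (hg2 : IntervalIntegrable (fun x => g x ^ 2) volume a b)
    (hh2 : IntervalIntegrable (fun x => h x ^ 2) volume a b) (hg : AEStronglyMeasurable g volume)
    (hh : AEStronglyMeasurable h volume) :
    IntervalIntegrable (fun x => (g x - h x) ^ 2) volume a b := by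
  rw [intervalIntegrable_iff] at *
  exact (memLp_two_iff_integrable_sq (hg.sub hh).restrict).1
    (((memLp_two_iff_integrable_sq hg.restrict).2 hg2).sub
      ((memLp_two_iff_integrable_sq hh.restrict).2 hh2))

lemma intervalIntegral_abs_mul_le (hab : a ≤ b)
    (hg2 : IntervalIntegrable (fun x => g x ^ 2) volume a b)
    (hh2 : IntervalIntegrable (fun x => h x ^ 2) volume a b) (hg : AEStronglyMeasurable g volume)
    (hh : AEStronglyMeasurable h volume) :
    ∫ x in a..b, |g x * h x| ≤ ((∫ x in a..b, g x ^ 2) + ∫ x in a..b, h x ^ 2) / 2 := by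
  rw [← integral_add hg2 hh2, ← intervalIntegral.integral_div]
  refine integral_mono_on hab (hg2.mul_of_sq hh2 hg hh).abs ((hg2.add hh2).div_const 2)
    fun x _ => ?_
  rw [abs_le]
  constructor <;> nlinarith [sq_nonneg (g x + h x), sq_nonneg (g x - h x)]

end L2

lemma norm_intervalIntegral_le_of_intervalIntegral_eq_zero {E : Type*} [NormedAddCommGroup E]
    [NormedSpace ℝ E] {g : ℝ → E} {M a b c d : ℝ} (hg : ∀ x, ‖g x‖ ≤ M)
    (hab : IntervalIntegrable g volume a b) (hbc : IntervalIntegrable g volume b c)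
    (hcd : IntervalIntegrable g volume c d) (h0 : ∫ x in a..d, g x = 0) :
    ‖∫ x in b..c, g x‖ ≤ M * (|b - a| + |d - c|) := by
  have hsplit : ∫ x in b..c, g x = -((∫ x in a..b, g x) + ∫ x in c..d, g x) := by
    rw [← integral_add_adjacent_intervals (hab.trans hbc) hcd,
      ← integral_add_adjacent_intervals hab hbc] at h0
    rw [eq_neg_iff_add_eq_zero, ← h0]
    abel
  rw [hsplit, norm_neg, mul_add]
  exact (norm_add_le _ _).trans (add_le_add (norm_integral_le_of_norm_le_const fun x _ => hg x)
    (norm_integral_le_of_norm_le_const fun x _ => hg x))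

lemma MeasureTheory.integrable_prod_of_integral_norm_le {α β E : Type*} [MeasurableSpace α]
    [MeasurableSpace β] [NormedAddCommGroup E] {μ : Measure α} {ν : Measure β} [IsFiniteMeasure μ]
    [SFinite ν] {F : α × β → E} (hF : AEStronglyMeasurable F (μ.prod ν))
    (hsec : ∀ x, Integrable (fun y => F (x, y)) ν) {M : ℝ} (hM : ∀ x, ∫ y, ‖F (x, y)‖ ∂ν ≤ M) :
    Integrable F (μ.prod ν) := by
  refine (integrable_prod_iff hF).2 ⟨ae_of_all _ hsec, ?_⟩
  refine (integrable_const M).mono' hF.norm.integral_prod_right' (ae_of_all _ fun x => ?_)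
  rw [norm_of_nonneg (integral_nonneg fun y => norm_nonneg _)]
  exact hM x

namespace Function.Periodic

variable {E : Type*} [NormedAddCommGroup E] [NormedSpace ℝ E] {f : ℝ → E} {T : ℝ}

lemma intervalIntegral_comp_add_right (hf : Periodic f T) (c : ℝ) :
    ∫ t in 0..T, f (t + c) = ∫ t in 0..T, f t := by
  rw [integral_comp_add_right, zero_add, add_comm T c, hf.intervalIntegral_add_eq c 0, zero_add]

lemma intervalIntegral_comp_sub_right (hf : Periodic f T) (c : ℝ) :
    ∫ t in 0..T, f (t - c) = ∫ t in 0..T, f t := by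
  simpa only [sub_eq_add_neg] using hf.intervalIntegral_comp_add_right (-c)

lemma intervalIntegral_comp_sub_left (hf : Periodic f T) (c : ℝ) :
    ∫ t in 0..T, f (c - t) = ∫ t in 0..T, f t := by
  rw [integral_comp_sub_left, sub_zero]
  simpa only [sub_add_cancel, zero_add] using hf.intervalIntegral_add_eq (c - T) 0

end Function.Periodic

noncomputable def autocorrelation (f : ℝ → ℝ) (T u : ℝ) : ℝ :=
  ∫ t in 0..T, f t * f (t - u)

section Autocorrelation

variable {f : ℝ → ℝ} {T : ℝ}

lemma measurable_autocorrelation (hmeas : Measurable f) : Measurable (autocorrelation f T) := by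
  have hF : StronglyMeasurable fun p : ℝ × ℝ => f p.2 * f (p.2 - p.1) :=
    (by fun_prop : Measurable fun p : ℝ × ℝ => f p.2 * f (p.2 - p.1)).stronglyMeasurable
  exact (hF.integral_prod_right'.sub hF.integral_prod_right').measurable

lemma intervalIntegrable_sq_comp_add (hT : 0 < T) (hf : Periodic f T)
    (hsq : IntervalIntegrable (fun t => f t ^ 2) volume 0 T) (c : ℝ) :
    IntervalIntegrable (fun t => f (t + c) ^ 2) volume 0 T := by
  simpa using ((hf.comp (· ^ 2)).intervalIntegrable₀ hT.ne' hsq c (T + c)).comp_add_right c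

lemma intervalIntegrable_sq_comp_sub (hT : 0 < T) (hf : Periodic f T)
    (hsq : IntervalIntegrable (fun t => f t ^ 2) volume 0 T) (c : ℝ) :
    IntervalIntegrable (fun t => f (t - c) ^ 2) volume 0 T := by
  simpa only [sub_eq_add_neg] using intervalIntegrable_sq_comp_add hT hf hsq (-c)

lemma intervalIntegral_sq_comp_add (hf : Periodic f T) (c : ℝ) :
    ∫ t in 0..T, f (t + c) ^ 2 = ∫ t in 0..T, f t ^ 2 :=
  (hf.comp (· ^ 2)).intervalIntegral_comp_add_right c

lemma intervalIntegral_sq_comp_sub (hf : Periodic f T) (c : ℝ) :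
    ∫ t in 0..T, f (t - c) ^ 2 = ∫ t in 0..T, f t ^ 2 :=
  (hf.comp (· ^ 2)).intervalIntegral_comp_sub_right c

lemma intervalIntegrable_mul_comp_sub (hT : 0 < T) (hf : Periodic f T) (hmeas : Measurable f)
    (hsq : IntervalIntegrable (fun t => f t ^ 2) volume 0 T) (u : ℝ) :
    IntervalIntegrable (fun t => f t * f (t - u)) volume 0 T :=
  .mul_of_sq hsq (intervalIntegrable_sq_comp_sub hT hf hsq u) hmeas.aestronglyMeasurable
    (hmeas.comp (measurable_sub_const u)).aestronglyMeasurable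

lemma intervalIntegral_abs_mul_comp_sub_le (hT : 0 < T) (hf : Periodic f T)
    (hmeas : Measurable f) (hsq : IntervalIntegrable (fun t => f t ^ 2) volume 0 T) (u : ℝ) :
    ∫ t in 0..T, |f t * f (t - u)| ≤ ∫ t in 0..T, f t ^ 2 := by
  refine (intervalIntegral_abs_mul_le hT.le hsq (intervalIntegrable_sq_comp_sub hT hf hsq u)
    hmeas.aestronglyMeasurable
    (hmeas.comp (measurable_sub_const u)).aestronglyMeasurable).trans_eq ?_
  rw [intervalIntegral_sq_comp_sub hf]
  ring

lemma abs_autocorrelation_le (hT : 0 < T) (hf : Periodic f T) (hmeas : Measurable f)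
    (hsq : IntervalIntegrable (fun t => f t ^ 2) volume 0 T) (u : ℝ) :
    |autocorrelation f T u| ≤ ∫ t in 0..T, f t ^ 2 :=
  (abs_integral_le_integral_abs hT.le).trans
    (intervalIntegral_abs_mul_comp_sub_le hT hf hmeas hsq u)

lemma intervalIntegrable_autocorrelation (hT : 0 < T) (hf : Periodic f T) (hmeas : Measurable f)
    (hsq : IntervalIntegrable (fun t => f t ^ 2) volume 0 T) (a b : ℝ) :
    IntervalIntegrable (autocorrelation f T) volume a b :=
  intervalIntegrable_const.mono_fun' (measurable_autocorrelation hmeas).aestronglyMeasurable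
    (ae_of_all _ fun u => abs_autocorrelation_le hT hf hmeas hsq u)

lemma intervalIntegral_autocorrelation_eq_zero (hT : 0 < T) (hf : Periodic f T)
    (hmeas : Measurable f) (hsq : IntervalIntegrable (fun t => f t ^ 2) volume 0 T)
    (havg : ∫ t in 0..T, f t = 0) :
    ∫ u in 0..T, autocorrelation f T u = 0 := by
  have hint : IntegrableOn (uncurry fun u t => f t * f (t - u)) (uIoc 0 T ×ˢ uIoc 0 T) := by
    rw [uIoc_of_le hT.le, IntegrableOn, Measure.volume_eq_prod, ← Measure.prod_restrict]
    refine integrable_prod_of_integral_norm_le (M := ∫ t in 0..T, f t ^ 2) (by fun_prop)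
      (fun u => ?_) (fun u => ?_)
    · exact (intervalIntegrable_iff_integrableOn_Ioc_of_le hT.le).1
        (intervalIntegrable_mul_comp_sub hT hf hmeas hsq u)
    · simpa only [uncurry_apply_pair, norm_eq_abs, integral_of_le hT.le] using
        intervalIntegral_abs_mul_comp_sub_le hT hf hmeas hsq u
  calc ∫ u in 0..T, autocorrelation f T u
      = ∫ t in 0..T, ∫ u in 0..T, f t * f (t - u) := intervalIntegral_intervalIntegral_swap hint
    _ = ∫ t in 0..T, f t * ∫ u in 0..T, f (t - u) := by
      simp_rw [intervalIntegral.integral_const_mul]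
    _ = 0 := by simp [hf.intervalIntegral_comp_sub_left, havg]

lemma intervalIntegral_sq_sub_eq (hT : 0 < T) (hf : Periodic f T) (hmeas : Measurable f)
    (hsq : IntervalIntegrable (fun t => f t ^ 2) volume 0 T) (x : ℝ) :
    ∫ t in 0..T, (f (t + x) - f (t - x)) ^ 2
      = 2 * (∫ t in 0..T, f t ^ 2) - 2 * autocorrelation f T (2 * x) := by
  have hadd := intervalIntegrable_sq_comp_add hT hf hsq x
  have hsub := intervalIntegrable_sq_comp_sub hT hf hsq x
  have hcross : ∫ t in 0..T, f (t + x) * f (t - x) = autocorrelation f T (2 * x) := by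
    have hper : Periodic (fun s => f s * f (s - 2 * x)) T := fun s => by
      simp only [hf s, add_sub_right_comm s T, hf (s - 2 * x)]
    simpa [autocorrelation, show ∀ t, t + x - 2 * x = t - x from fun t => by ring] using
      hper.intervalIntegral_comp_add_right x
  have hexp : (fun t => (f (t + x) - f (t - x)) ^ 2)
      = fun t => f (t + x) ^ 2 + f (t - x) ^ 2 - 2 * (f (t + x) * f (t - x)) := by
    ext t; ring
  rw [hexp, integral_sub (hadd.add hsub)
      ((hadd.mul_of_sq hsub (hmeas.comp (measurable_add_const x)).aestronglyMeasurable
        (hmeas.comp (measurable_sub_const x)).aestronglyMeasurable).const_mul 2),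
    integral_add hadd hsub, intervalIntegral.integral_const_mul, intervalIntegral_sq_comp_add hf,
    intervalIntegral_sq_comp_sub hf, hcross]
  ring

end Autocorrelation

section Strip

variable {f : ℝ → ℝ} {T : ℝ}

lemma setIntegral_strip_eq (hT : 0 < T) (hf : Periodic f T) (hmeas : Measurable f)
    (hsq : IntervalIntegrable (fun t => f t ^ 2) volume 0 T) {a b : ℝ} (hab : a ≤ b) :
    ∫ z in Ioc 0 T ×ˢ Ioo a b, (f (z.1 + z.2) - f (z.1 - z.2)) ^ 2
      = ∫ x in a..b, (2 * (∫ t in 0..T, f t ^ 2) - 2 * autocorrelation f T (2 * x)) := by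
  have hsec : ∀ x, IntegrableOn (fun t => (f (t + x) - f (t - x)) ^ 2) (Ioc 0 T) := fun x =>
    (intervalIntegrable_iff_integrableOn_Ioc_of_le hT.le).1 <|
      (intervalIntegrable_sq_comp_add hT hf hsq x).sq_sub
        (intervalIntegrable_sq_comp_sub hT hf hsq x)
        (hmeas.comp (measurable_add_const x)).aestronglyMeasurable
        (hmeas.comp (measurable_sub_const x)).aestronglyMeasurable
  have hint : IntegrableOn (fun z : ℝ × ℝ => (f (z.2 + z.1) - f (z.2 - z.1)) ^ 2)
      (Ioo a b ×ˢ Ioc 0 T) (volume.prod volume) := by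
    rw [IntegrableOn, ← Measure.prod_restrict]
    refine integrable_prod_of_integral_norm_le (M := 4 * ∫ t in 0..T, f t ^ 2) (by fun_prop) hsec
      fun x => ?_
    simp only [norm_pow, norm_eq_abs, sq_abs, ← integral_of_le hT.le,
      intervalIntegral_sq_sub_eq hT hf hmeas hsq]
    linarith [(abs_le.1 (abs_autocorrelation_le hT hf hmeas hsq (2 * x))).1]
  rw [Measure.volume_eq_prod, ← setIntegral_prod_swap]
  simp only [Prod.fst_swap, Prod.snd_swap]
  rw [setIntegral_prod _ hint, integral_of_le hab, integral_Ioc_eq_integral_Ioo]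
  refine setIntegral_congr_fun measurableSet_Ioo fun x _ => ?_
  simp only [← integral_of_le hT.le, intervalIntegral_sq_sub_eq hT hf hmeas hsq]

lemma le_setIntegral_strip (hT : 0 < T) (hf : Periodic f T) (hmeas : Measurable f)
    (hsq : IntervalIntegrable (fun t => f t ^ 2) volume 0 T) (havg : ∫ t in 0..T, f t = 0)
    {a : ℝ} (ha : 0 ≤ a) (haT : 4 * a ≤ T) :
    (T - 8 * a) * ∫ t in 0..T, f t ^ 2
      ≤ ∫ z in Ioc 0 T ×ˢ Ioo a (T / 2 - a), (f (z.1 + z.2) - f (z.1 - z.2)) ^ 2 := by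
  have hC := intervalIntegrable_autocorrelation hT hf hmeas hsq
  have hmid : ‖∫ u in 2 * a..T - 2 * a, autocorrelation f T u‖
      ≤ (∫ t in 0..T, f t ^ 2) * (|2 * a - 0| + |T - (T - 2 * a)|) :=
    norm_intervalIntegral_le_of_intervalIntegral_eq_zero (abs_autocorrelation_le hT hf hmeas hsq)
      (hC _ _) (hC _ _) (hC _ _) (intervalIntegral_autocorrelation_eq_zero hT hf hmeas hsq havg)
  have hC2 : IntervalIntegrable (fun x => autocorrelation f T (2 * x)) volume a (T / 2 - a) := by
    have h := (hC (2 * a) (T - 2 * a)).comp_mul_left (c := 2)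
    rwa [mul_div_cancel_left₀ _ two_ne_zero, sub_div, mul_div_cancel_left₀ _ two_ne_zero] at h
  rw [setIntegral_strip_eq hT hf hmeas hsq (by linarith),
    integral_sub intervalIntegrable_const (hC2.const_mul 2), intervalIntegral.integral_const,
    intervalIntegral.integral_const_mul, integral_comp_mul_left _ two_ne_zero,
    show 2 * (T / 2 - a) = T - 2 * a by ring, smul_eq_mul, smul_eq_mul,
    mul_inv_cancel_left₀ two_ne_zero]
  rw [norm_eq_abs, sub_zero, sub_sub_cancel, abs_of_nonneg (by linarith : (0 : ℝ) ≤ 2 * a)] at hmid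
  linarith [(abs_le.1 hmid).2]

end Strip

theorem stmt_14 (vh : ℝ → ℝ) (α : ℝ) (hα0 : 0 ≤ α) (hα1 : α ≤ 1/8)
    (hper : Function.Periodic vh (2 * π)) (hmeas : Measurable vh)
    (hint : IntegrableOn (fun s => (vh s) ^ 2) (Ioc 0 (2 * π)))
    (havg : ∫ s in Ioc 0 (2 * π), vh s = 0) :
    (∫ z in (Ioc 0 (2 * π)) ×ˢ (Ioo (α * π) (π - α * π)),
        (vh (z.1 + z.2) - vh (z.1 - z.2)) ^ 2) ≥
        2 * π * (1 - 4 * α) * ∫ s in Ioc 0 (2 * π), (vh s) ^ 2 ∧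
      2 * π * (1 - 4 * α) * (∫ s in Ioc 0 (2 * π), (vh s) ^ 2) ≥
        π * ∫ s in Ioc 0 (2 * π), (vh s) ^ 2 := by
  have h2π : 0 < 2 * π := by positivity
  have hsq : IntervalIntegrable (fun s => vh s ^ 2) volume 0 (2 * π) :=
    (intervalIntegrable_iff_integrableOn_Ioc_of_le h2π.le).2 hint
  have hstrip := le_setIntegral_strip h2π hper hmeas hsq (by rwa [integral_of_le h2π.le])
    (mul_nonneg hα0 pi_pos.le) (by nlinarith [pi_pos])
  have hnonneg : 0 ≤ ∫ s in 0..2 * π, vh s ^ 2 :=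
    integral_nonneg h2π.le fun _ _ => sq_nonneg _
  rw [show 2 * π / 2 - α * π = π - α * π by ring] at hstrip
  rw [← integral_of_le h2π.le]
  constructor
  · linarith
  · nlinarith [mul_nonneg (mul_nonneg pi_pos.le hnonneg) (by linarith : (0 : ℝ) ≤ 1 - 8 * α)]
end

section
/- Let k be a positive integer, B continuous on the closure of Ω := 𝕋 × (0,π) with B ≥ 0 on Ω. Set α_1 := 1/8 and α_k := 1/(4(1+2k)) for k ≥ 2, and c_k(B) := 4^{-k} min over the closure of Ω_{α_k} of B. Then for every v of the form v(t,x) = v̂(t+x) - v̂(t-x) with v̂ ∈ L^{2k}(𝕋) of zero average, ∫_Ω B v^{2k} ≥ c_k(B) ∫_Ω v^{2k}. -/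
/-!
Put `G y = ∫_𝕋 |v̂ (t + y) - v̂ t| ^ (2k) dt`. The substitution `t ↦ t - x` turns `∫_Ω v ^ (2k)`
into `∫₀^π G (2x) dx`. `G` is even, `2π`-periodic and quasi-subadditive,
`G (y + z) ≤ 2 ^ (2k - 1) (G y + G z)`, so on the boundary layers `x < απ` and `x > π - απ` the
values `G (2x)` are controlled by averages over the middle region `(απ, π - απ)`. For `α ≤ 1/8`
this yields `∫₀^π G (2x) ≤ 4 ^ k ∫_{απ}^{π-απ} G (2x)`: at least a `4 ^ (-k)` fraction of
`∫_Ω v ^ (2k)` lives in `Ω_α`, where `B` is at least its minimum over that strip.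
-/

open MeasureTheory Real Set Function
open scoped ENNReal

theorem Function.Periodic.setLIntegral_Ioc_comp_add {ψ : ℝ → ℝ≥0∞} {T : ℝ} (hψ : Periodic ψ T)
    (hm : Measurable ψ) (hT : 0 < T) (a : ℝ) :
    ∫⁻ t in Ioc 0 T, ψ (t + a) = ∫⁻ t in Ioc 0 T, ψ t := by
  have : VAddInvariantMeasure (AddSubgroup.zmultiples T) ℝ volume :=
    ⟨fun c s _ => measure_preimage_add _ _ _⟩
  calc ∫⁻ t in Ioc 0 T, ψ (t + a) = ∫⁻ t in Ioc a (a + T), ψ t := by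
        rw [← (measurePreserving_add_right volume a).setLIntegral_comp_preimage
          measurableSet_Ioc hm, preimage_add_const_Ioc, sub_self, add_sub_cancel_left]
    _ = ∫⁻ t in Ioc 0 (0 + T), ψ t :=
        (isAddFundamentalDomain_Ioc hT a).setLIntegral_eq (isAddFundamentalDomain_Ioc hT 0) ψ
          hψ.map_vadd_zmultiples
    _ = ∫⁻ t in Ioc 0 T, ψ t := by rw [zero_add]

theorem abs_sub_pow_le_two_pow_mul (a b c : ℝ) (p : ℕ) :
    |a - c| ^ p ≤ 2 ^ (p - 1) * (|a - b| ^ p + |b - c| ^ p) :=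
  (pow_le_pow_left₀ (abs_nonneg _) (abs_sub_le a b c) p).trans
    (add_pow_le (abs_nonneg _) (abs_nonneg _) p)

noncomputable def diffPowLIntegral (v : ℝ → ℝ) (T : ℝ) (p : ℕ) (y : ℝ) : ℝ≥0∞ :=
  ∫⁻ t in Ioc 0 T, ENNReal.ofReal (|v (t + y) - v t| ^ p)

section diffPowLIntegral

variable {v : ℝ → ℝ} {T : ℝ} {p : ℕ}

theorem measurable_diffPowLIntegral (hvm : Measurable v) :
    Measurable (diffPowLIntegral v T p) :=
  Measurable.lintegral_prod_right'
    (f := fun q : ℝ × ℝ => ENNReal.ofReal (|v (q.2 + q.1) - v q.2| ^ p)) (by fun_prop)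

theorem diffPowLIntegral_add_period (hv : Periodic v T) (y : ℝ) :
    diffPowLIntegral v T p (y + T) = diffPowLIntegral v T p y := by
  simp only [diffPowLIntegral, ← add_assoc, hv _]

theorem setLIntegral_Ioc_diffPow_comp_add (hv : Periodic v T) (hvm : Measurable v) (hT : 0 < T)
    (a y : ℝ) :
    ∫⁻ t in Ioc 0 T, ENNReal.ofReal (|v (t + a + y) - v (t + a)| ^ p) =
      diffPowLIntegral v T p y := by
  refine Periodic.setLIntegral_Ioc_comp_add (ψ := fun t => ENNReal.ofReal (|v (t + y) - v t| ^ p))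
    (fun t => ?_) (by fun_prop) hT a
  simp only [add_right_comm t T y, hv _]

theorem diffPowLIntegral_neg (hv : Periodic v T) (hvm : Measurable v) (hT : 0 < T) (y : ℝ) :
    diffPowLIntegral v T p (-y) = diffPowLIntegral v T p y := by
  rw [← setLIntegral_Ioc_diffPow_comp_add hv hvm hT (-y) y, diffPowLIntegral]
  simp only [neg_add_cancel_right, abs_sub_comm]

theorem diffPowLIntegral_add_le (hv : Periodic v T) (hvm : Measurable v) (hT : 0 < T) (y z : ℝ) :
    diffPowLIntegral v T p (y + z) ≤
      2 ^ (p - 1) * (diffPowLIntegral v T p y + diffPowLIntegral v T p z) := by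
  have hpt : ∀ t, ENNReal.ofReal (|v (t + (y + z)) - v t| ^ p) ≤
      2 ^ (p - 1) * (ENNReal.ofReal (|v (t + z + y) - v (t + z)| ^ p) +
        ENNReal.ofReal (|v (t + z) - v t| ^ p)) := fun t => by
    rw [← ENNReal.ofReal_add (by positivity) (by positivity), ← ENNReal.ofReal_ofNat 2,
      ← ENNReal.ofReal_pow zero_le_two, ← ENNReal.ofReal_mul (by positivity), add_right_comm,
      ← add_assoc]
    exact ENNReal.ofReal_le_ofReal (abs_sub_pow_le_two_pow_mul _ _ _ p)
  calc diffPowLIntegral v T p (y + z)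
      ≤ ∫⁻ t in Ioc 0 T, 2 ^ (p - 1) * (ENNReal.ofReal (|v (t + z + y) - v (t + z)| ^ p) +
          ENNReal.ofReal (|v (t + z) - v t| ^ p)) := lintegral_mono hpt
    _ = 2 ^ (p - 1) * (diffPowLIntegral v T p y + diffPowLIntegral v T p z) := by
      rw [lintegral_const_mul _ (by fun_prop), lintegral_add_left (by fun_prop),
        setLIntegral_Ioc_diffPow_comp_add hv hvm hT]
      rfl

theorem setLIntegral_prod_eq_diffPowLIntegral (hv : Periodic v T) (hvm : Measurable v) (hT : 0 < T)
    (X : Set ℝ) :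
    ∫⁻ z in Ioc 0 T ×ˢ X, ENNReal.ofReal (|v (z.1 + z.2) - v (z.1 - z.2)| ^ p) =
      ∫⁻ x in X, diffPowLIntegral v T p (2 * x) := by
  rw [Measure.volume_eq_prod, ← Measure.prod_restrict, lintegral_prod_symm _ (by fun_prop)]
  refine lintegral_congr fun x => ?_
  rw [← setLIntegral_Ioc_diffPow_comp_add hv hvm hT (-x)]
  congr! 4 with t
  ring_nf

end diffPowLIntegral

section BoundaryLayer

variable {g : ℝ → ℝ≥0∞} {α L : ℝ} {C : ℝ≥0∞}

/- Average `g x ≤ C (g u + g (u - x))` over `u ∈ (2αL, L - αL)`: this interval has length at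
least `5αL`, and it stays in the middle region after translation by `-x`. -/
theorem ofReal_mul_le_two_mul_setLIntegral_Ioo (hg : Measurable g) (hα0 : 0 < α) (hα : α ≤ 1 / 8)
    (hsub : ∀ x u, g x ≤ C * (g u + g (u - x))) {x : ℝ} (hx : x ∈ Ioc 0 (α * L)) :
    ENNReal.ofReal (5 * (α * L)) * g x ≤ 2 * C * ∫⁻ u in Ioo (α * L) (L - α * L), g u := by
  set M := ∫⁻ u in Ioo (α * L) (L - α * L), g u
  set J := Ioo (2 * (α * L)) (L - α * L)
  have hαL : 0 < α * L := hx.1.trans_le hx.2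
  have hL : 0 < L := pos_of_mul_pos_right hαL hα0.le
  have hJ : ENNReal.ofReal (5 * (α * L)) ≤ volume J := by
    rw [Real.volume_Ioo]
    exact ENNReal.ofReal_le_ofReal (by nlinarith)
  have hJM : ∫⁻ u in J, g u ≤ M := lintegral_mono_set (Ioo_subset_Ioo_left (by linarith))
  have hJxM : ∫⁻ u in J, g (u - x) ≤ M := by
    calc ∫⁻ u in J, g (u - x) ≤ ∫⁻ u in (· - x) ⁻¹' Ioo (α * L) (L - α * L), g (u - x) := by
          refine lintegral_mono_set fun u hu => ?_
          simp only [mem_preimage, mem_Ioo] at hu ⊢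
          constructor <;> linarith [hx.1, hx.2, hu.1, hu.2]
      _ = M :=
        (measurePreserving_sub_right volume x).setLIntegral_comp_preimage measurableSet_Ioo hg
  calc ENNReal.ofReal (5 * (α * L)) * g x ≤ volume J * g x := by gcongr
    _ = ∫⁻ _ in J, g x := by rw [setLIntegral_const, mul_comm]
    _ ≤ ∫⁻ u in J, C * (g u + g (u - x)) := lintegral_mono fun u => hsub x u
    _ = C * ((∫⁻ u in J, g u) + ∫⁻ u in J, g (u - x)) := by
      rw [lintegral_const_mul _ (by fun_prop), lintegral_add_left hg]
    _ ≤ C * (M + M) := by gcongr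
    _ = 2 * C * M := by ring

theorem five_mul_setLIntegral_Ioc_le (hg : Measurable g) (hα0 : 0 < α) (hα : α ≤ 1 / 8)
    (hL : 0 < L) (hsub : ∀ x u, g x ≤ C * (g u + g (u - x))) :
    5 * ∫⁻ x in Ioc 0 (α * L), g x ≤ 2 * C * ∫⁻ u in Ioo (α * L) (L - α * L), g u := by
  set M := ∫⁻ u in Ioo (α * L) (L - α * L), g u
  have hαL : 0 < α * L := mul_pos hα0 hL
  have h5 : ENNReal.ofReal (5 * (α * L)) = ENNReal.ofReal (α * L) * 5 := by
    rw [mul_comm, ENNReal.ofReal_mul hαL.le, ENNReal.ofReal_ofNat]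
  rw [← ENNReal.mul_le_mul_iff_right (ENNReal.ofReal_pos.2 hαL).ne' ENNReal.ofReal_ne_top,
    ← mul_assoc, ← h5, ← lintegral_const_mul _ hg]
  calc ∫⁻ x in Ioc 0 (α * L), ENNReal.ofReal (5 * (α * L)) * g x
      ≤ ∫⁻ _ in Ioc 0 (α * L), 2 * C * M :=
        setLIntegral_mono measurable_const fun x hx =>
          ofReal_mul_le_two_mul_setLIntegral_Ioo hg hα0 hα hsub hx
    _ = ENNReal.ofReal (α * L) * (2 * C * M) := by
      rw [setLIntegral_const, Real.volume_Ioc, sub_zero, mul_comm]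

theorem setLIntegral_Ico_sub_eq_Ioc (hg : Measurable g) (hsymm : ∀ x, g (L - x) = g x) (a : ℝ) :
    ∫⁻ x in Ico (L - a) L, g x = ∫⁻ x in Ioc 0 a, g x := by
  rw [← (Measure.measurePreserving_sub_left volume L).setLIntegral_comp_preimage
    measurableSet_Ico hg, preimage_const_sub_Ico, sub_self, sub_sub_cancel]
  simp only [hsymm]

theorem five_mul_setLIntegral_Ioo_le (hg : Measurable g) (hα0 : 0 < α) (hα : α ≤ 1 / 8)
    (hL : 0 < L) (hsymm : ∀ x, g (L - x) = g x) (hsub : ∀ x u, g x ≤ C * (g u + g (u - x))) :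
    5 * ∫⁻ x in Ioo 0 L, g x ≤ (5 + 4 * C) * ∫⁻ u in Ioo (α * L) (L - α * L), g u := by
  set M := ∫⁻ u in Ioo (α * L) (L - α * L), g u
  have hcover : Ioo 0 L ⊆ (Ioc 0 (α * L) ∪ Ico (L - α * L) L) ∪ Ioo (α * L) (L - α * L) := by
    intro x hx
    by_cases h1 : x ≤ α * L
    · exact Or.inl (Or.inl ⟨hx.1, h1⟩)
    by_cases h2 : L - α * L ≤ x
    · exact Or.inl (Or.inr ⟨h2, hx.2⟩)
    · exact Or.inr ⟨not_le.1 h1, not_le.1 h2⟩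
  have hlayer := five_mul_setLIntegral_Ioc_le hg hα0 hα hL hsub
  calc 5 * ∫⁻ x in Ioo 0 L, g x
      ≤ 5 * ((∫⁻ x in Ioc 0 (α * L), g x) + (∫⁻ x in Ico (L - α * L) L, g x) + M) := by
        gcongr
        refine (lintegral_mono_set hcover).trans ((lintegral_union_le _ _ _).trans ?_)
        gcongr
        exact lintegral_union_le _ _ _
    _ = 5 * (∫⁻ x in Ioc 0 (α * L), g x) + 5 * (∫⁻ x in Ioc 0 (α * L), g x) + 5 * M := by
        rw [setLIntegral_Ico_sub_eq_Ioc hg hsymm]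
        ring
    _ ≤ 2 * C * M + 2 * C * M + 5 * M := by gcongr
    _ = (5 + 4 * C) * M := by ring

end BoundaryLayer

theorem five_add_four_mul_two_pow_le {k : ℕ} (hk : 0 < k) :
    (5 + 4 * 2 ^ (2 * k - 1) : ℝ≥0∞) ≤ 5 * 4 ^ k := by
  obtain ⟨j, rfl⟩ := Nat.exists_eq_add_of_le' hk
  have h : 4 * 2 ^ (2 * (j + 1) - 1) = 2 * 4 ^ (j + 1) := by
    rw [show 2 * (j + 1) - 1 = 2 * j + 1 by omega, pow_succ, pow_mul, pow_succ]; ring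
  have h4 : 4 ≤ 4 ^ (j + 1) := Nat.le_self_pow (Nat.succ_ne_zero j) 4
  exact_mod_cast (show 5 + 4 * 2 ^ (2 * (j + 1) - 1) ≤ 5 * 4 ^ (j + 1) by omega)

section StripEstimate

variable {v : ℝ → ℝ} {L α : ℝ} {k : ℕ}

theorem setLIntegral_Ioo_diffPowLIntegral_le_four_pow_mul (hv : Periodic v (2 * L))
    (hvm : Measurable v) (hL : 0 < L) (hα0 : 0 < α) (hα : α ≤ 1 / 8) (hk : 0 < k) :
    ∫⁻ x in Ioo 0 L, diffPowLIntegral v (2 * L) (2 * k) (2 * x) ≤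
      4 ^ k * ∫⁻ x in Ioo (α * L) (L - α * L), diffPowLIntegral v (2 * L) (2 * k) (2 * x) := by
  set G := diffPowLIntegral v (2 * L) (2 * k)
  have hT : 0 < 2 * L := by positivity
  have hsymm : ∀ x, G (2 * (L - x)) = G (2 * x) := fun x => by
    simp only [G]
    rw [show 2 * (L - x) = -(2 * x) + 2 * L by ring, diffPowLIntegral_add_period hv,
      diffPowLIntegral_neg hv hvm hT]
  have hsub : ∀ x u, G (2 * x) ≤ 2 ^ (2 * k - 1) * (G (2 * u) + G (2 * (u - x))) := fun x u => by
    simp only [G]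
    rw [← diffPowLIntegral_neg hv hvm hT (2 * (u - x))]
    convert diffPowLIntegral_add_le hv hvm hT (2 * u) (-(2 * (u - x))) using 2
    ring
  have h5 := five_mul_setLIntegral_Ioo_le ((measurable_diffPowLIntegral hvm).comp
    (measurable_const_mul 2)) hα0 hα hL hsymm hsub
  rw [← ENNReal.mul_le_mul_iff_right (by norm_num : (5 : ℝ≥0∞) ≠ 0) (by norm_num), ← mul_assoc]
  exact h5.trans (mul_le_mul_left (five_add_four_mul_two_pow_le hk) _)

theorem setLIntegral_Ioc_prod_Ioo_le_four_pow_mul (hv : Periodic v (2 * L)) (hvm : Measurable v)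
    (hL : 0 < L) (hα0 : 0 < α) (hα : α ≤ 1 / 8) (hk : 0 < k) :
    ∫⁻ z in Ioc 0 (2 * L) ×ˢ Ioo 0 L, ENNReal.ofReal ((v (z.1 + z.2) - v (z.1 - z.2)) ^ (2 * k)) ≤
      4 ^ k * ∫⁻ z in Ioc 0 (2 * L) ×ˢ Ioo (α * L) (L - α * L),
        ENNReal.ofReal ((v (z.1 + z.2) - v (z.1 - z.2)) ^ (2 * k)) := by
  have hT : 0 < 2 * L := by positivity
  have h := setLIntegral_Ioo_diffPowLIntegral_le_four_pow_mul hv hvm hL hα0 hα hk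
  rw [← setLIntegral_prod_eq_diffPowLIntegral hv hvm hT,
    ← setLIntegral_prod_eq_diffPowLIntegral hv hvm hT] at h
  simpa only [(even_two_mul k).pow_abs] using h

end StripEstimate

theorem setIntegral_le_toReal_mul_of_setLIntegral_le {X : Type*} [MeasurableSpace X]
    {μ : Measure X} {f : X → ℝ} {s t : Set X} {K : ℝ≥0∞} (hK : K ≠ ⊤) (hts : t ⊆ s)
    (hf0 : 0 ≤ f) (hf : IntegrableOn f s μ)
    (h : ∫⁻ x in s, ENNReal.ofReal (f x) ∂μ ≤ K * ∫⁻ x in t, ENNReal.ofReal (f x) ∂μ) :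
    ∫ x in s, f x ∂μ ≤ K.toReal * ∫ x in t, f x ∂μ := by
  have hft : ∫⁻ x in t, ENNReal.ofReal (f x) ∂μ ≠ ⊤ :=
    ((hf.mono_set hts).lintegral_lt_top).ne
  rw [integral_eq_lintegral_of_nonneg_ae (.of_forall hf0) hf.aestronglyMeasurable,
    integral_eq_lintegral_of_nonneg_ae (.of_forall hf0) (hf.mono_set hts).aestronglyMeasurable,
    ← ENNReal.toReal_mul]
  exact ENNReal.toReal_mono (ENNReal.mul_ne_top hK hft) h

theorem mul_setIntegral_le_setIntegral_mul {X : Type*} [MeasurableSpace X] {μ : Measure X}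
    {B f : X → ℝ} {s t : Set X} {m : ℝ} (hs : MeasurableSet s) (ht : MeasurableSet t)
    (hts : t ⊆ s) (hf0 : 0 ≤ f) (hB0 : ∀ x ∈ s, 0 ≤ B x) (hmB : ∀ x ∈ t, m ≤ B x)
    (hf : IntegrableOn f s μ) (hBf : IntegrableOn (fun x => B x * f x) s μ) :
    m * ∫ x in t, f x ∂μ ≤ ∫ x in s, B x * f x ∂μ :=
  calc m * ∫ x in t, f x ∂μ = ∫ x in t, m * f x ∂μ := (integral_const_mul m f).symm
    _ ≤ ∫ x in t, B x * f x ∂μ :=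
      setIntegral_mono_on ((hf.mono_set hts).const_mul m) (hBf.mono_set hts) ht
        fun x hx => mul_le_mul_of_nonneg_right (hmB x hx) (hf0 x)
    _ ≤ ∫ x in s, B x * f x ∂μ :=
      setIntegral_mono_set hBf
        (ae_restrict_of_forall_mem hs fun x hx => mul_nonneg (hB0 x hx) (hf0 x)) hts.eventuallyLE

theorem sInf_image_nonneg_of_subset_closure {X : Type*} [TopologicalSpace X] {B : X → ℝ}
    {D K : Set X} (hB : ContinuousOn B (closure D)) (hB0 : ∀ z ∈ D, 0 ≤ B z)
    (hK : K ⊆ closure D) : 0 ≤ sInf (B '' K) := by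
  refine Real.sInf_nonneg ?_
  rintro _ ⟨z, hz, rfl⟩
  exact ContinuousWithinAt.closure_le (hK hz) continuousWithinAt_const
    ((hB z (hK hz)).mono subset_closure) hB0

noncomputable def alphaK (k : ℕ) : ℝ := if k = 1 then 1 / 8 else 1 / (4 * (1 + 2 * (k : ℝ)))

theorem alphaK_pos (k : ℕ) : 0 < alphaK k := by
  unfold alphaK
  split_ifs <;> positivity

theorem alphaK_le_one_div_eight {k : ℕ} (hk : 0 < k) : alphaK k ≤ 1 / 8 := by
  unfold alphaK
  split_ifs
  · rfl
  · have : (1 : ℝ) ≤ k := by exact_mod_cast hk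
    exact one_div_le_one_div_of_le (by norm_num) (by linarith)

theorem stmt_16_general (k : ℕ) (hk : 0 < k) (B : ℝ × ℝ → ℝ)
    (hBc : ContinuousOn B ((Icc 0 (2 * π)) ×ˢ (Icc 0 π)))
    (hB0 : ∀ z ∈ (Ioc 0 (2 * π)) ×ˢ (Ioo 0 π), 0 ≤ B z)
    (αk : ℝ) (hαk : αk = if k = 1 then 1/8 else 1 / (4 * (1 + 2 * (k : ℝ))))
    (c : ℝ)
    (hc : c = (1 / 4 ^ k) * sInf (B '' ((Icc 0 (2 * π)) ×ˢ (Icc (αk * π) (π - αk * π)))))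
    (vh : ℝ → ℝ) (hper : Function.Periodic vh (2 * π)) (hmeas : Measurable vh) :
    (∫ z in (Ioc 0 (2 * π)) ×ˢ (Ioo 0 π),
        B z * (vh (z.1 + z.2) - vh (z.1 - z.2)) ^ (2 * k)) ≥
      c * ∫ z in (Ioc 0 (2 * π)) ×ˢ (Ioo 0 π), (vh (z.1 + z.2) - vh (z.1 - z.2)) ^ (2 * k) := by
  set D := Ioc 0 (2 * π) ×ˢ Ioo 0 π
  set E := Ioc 0 (2 * π) ×ˢ Ioo (αk * π) (π - αk * π)
  set K := Icc 0 (2 * π) ×ˢ Icc (αk * π) (π - αk * π)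
  set f := fun z : ℝ × ℝ => (vh (z.1 + z.2) - vh (z.1 - z.2)) ^ (2 * k)
  have hf0 : 0 ≤ f := fun z => (even_two_mul k).pow_nonneg _
  have hD : MeasurableSet D := measurableSet_Ioc.prod measurableSet_Ioo
  -- Without integrability the right-hand side is the junk value `c * 0`.
  by_cases hf : IntegrableOn f D
  swap
  · rw [integral_undef hf, mul_zero]
    exact setIntegral_nonneg hD fun z hz => mul_nonneg (hB0 z hz) (hf0 z)
  have hα : αk = alphaK k := hαk
  have hα0 := hα ▸ alphaK_pos k
  have hα8 := hα ▸ alphaK_le_one_div_eight hk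
  have hDcl : closure D = Icc 0 (2 * π) ×ˢ Icc 0 π := by
    rw [closure_prod_eq, closure_Ioc (by positivity), closure_Ioo pi_pos.ne]
  have hED : E ⊆ D := prod_mono_right (Ioo_subset_Ioo (by positivity) (by nlinarith [pi_pos]))
  have hKD : K ⊆ closure D :=
    hDcl ▸ prod_mono_right (Icc_subset_Icc (by positivity) (by nlinarith [pi_pos]))
  have hm0 := sInf_image_nonneg_of_subset_closure (hDcl ▸ hBc) hB0 hKD
  have hmB : ∀ z ∈ E, sInf (B '' K) ≤ B z := fun z hz =>
    csInf_le ((isCompact_Icc.prod isCompact_Icc).bddBelow_image (hBc.mono (hDcl ▸ hKD)))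
      ⟨z, ⟨Ioc_subset_Icc_self hz.1, Ioo_subset_Icc_self hz.2⟩, rfl⟩
  have hBf : IntegrableOn (fun z => B z * f z) D :=
    hf.continuousOn_mul_of_subset hBc (isCompact_Icc.prod isCompact_Icc) hD
      (hDcl ▸ subset_closure)
  have hfDE : ∫ z in D, f z ≤ 4 ^ k * ∫ z in E, f z := by
    simpa using setIntegral_le_toReal_mul_of_setLIntegral_le
      (ENNReal.pow_ne_top ENNReal.ofNat_ne_top) hED hf0 hf
      (setLIntegral_Ioc_prod_Ioo_le_four_pow_mul hper hmeas pi_pos hα0 hα8 hk)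
  rw [ge_iff_le, hc]
  calc 1 / 4 ^ k * sInf (B '' K) * ∫ z in D, f z
      ≤ 1 / 4 ^ k * sInf (B '' K) * (4 ^ k * ∫ z in E, f z) := by gcongr
    _ = sInf (B '' K) * ∫ z in E, f z := by field_simp
    _ ≤ ∫ z in D, B z * f z :=
      mul_setIntegral_le_setIntegral_mul hD (measurableSet_Ioc.prod measurableSet_Ioo) hED hf0
        hB0 hmB hf hBf

theorem stmt_16 (k : ℕ) (hk : 0 < k) (B : ℝ × ℝ → ℝ)
    (hBper : ∀ t x, B (t + 2 * π, x) = B (t, x))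
    (hBc : ContinuousOn B ((Icc 0 (2 * π)) ×ˢ (Icc 0 π)))
    (hB0 : ∀ z ∈ (Ioc 0 (2 * π)) ×ˢ (Ioo 0 π), 0 ≤ B z)
    (αk : ℝ) (hαk : αk = if k = 1 then 1/8 else 1 / (4 * (1 + 2 * (k : ℝ))))
    (c : ℝ)
    (hc : c = (1 / 4 ^ k) * sInf (B '' ((Icc 0 (2 * π)) ×ˢ (Icc (αk * π) (π - αk * π)))))
    (vh : ℝ → ℝ) (hper : Function.Periodic vh (2 * π)) (hmeas : Measurable vh)
    (hint : IntegrableOn (fun s => (vh s) ^ (2 * k)) (Ioc 0 (2 * π)))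
    (havg : ∫ s in Ioc 0 (2 * π), vh s = 0) :
    (∫ z in (Ioc 0 (2 * π)) ×ˢ (Ioo 0 π),
        B z * (vh (z.1 + z.2) - vh (z.1 - z.2)) ^ (2 * k)) ≥
      c * ∫ z in (Ioc 0 (2 * π)) ×ˢ (Ioo 0 π), (vh (z.1 + z.2) - vh (z.1 - z.2)) ^ (2 * k) :=
  stmt_16_general k hk B hBc hB0 αk hαk c hc vh hper hmeas
end
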